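/- arXiv:2401.09746 — 6 statements merged into one kernel-verified Lean document; each statement's English description precedes it below -/
import Mathlib

section
/- Let X be a set equipped with two topologies τ₁ and τ₂ such that τ₁ is finer than τ₂ (every τ₂-open set is τ₁-open). Assume that (X,τ₁) is countably compact in the sense that every sequence in X has a cluster (accumulation) point with respect to τ₁, and that (X,τ₂) is Hausdorff and sequentially compact (every sequence in X has a τ₂-convergent subsequence). Then (X,τ₁) is Hausdorff and sequentially compact: every sequence in X has a subsequence converging with respect to τ₁. -/
/-- If τ₁ is finer than τ₂, (X,τ₁) is countably compact (every sequence has a cluster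
point), and (X,τ₂) is Hausdorff and sequentially compact, then (X,τ₁) is Hausdorff
and sequentially compact. -/
theorem stmt0 {X : Type*} (t1 t2 : TopologicalSpace X)
    (hfiner : t1 ≤ t2)
    (hcc : ∀ u : ℕ → X, ∃ x : X, @MapClusterPt X t1 ℕ x Filter.atTop u)
    (ht2haus : @T2Space X t2)
    (ht2seq : ∀ u : ℕ → X, ∃ (x : X) (φ : ℕ → ℕ), StrictMono φ ∧
      Filter.Tendsto (u ∘ φ) Filter.atTop (@nhds X t2 x)) :
    @T2Space X t1 ∧
      ∀ u : ℕ → X, ∃ (x : X) (φ : ℕ → ℕ), StrictMono φ ∧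
        Filter.Tendsto (u ∘ φ) Filter.atTop (@nhds X t1 x) := by
  have hnhds : ∀ x : X, @nhds X t1 x ≤ @nhds X t2 x := fun x =>
    nhds_mono hfiner
  refine ⟨t2Space_antitone hfiner ht2haus, fun u => ?_⟩
  obtain ⟨x, φ, hφ, hconv⟩ := ht2seq u
  refine ⟨x, φ, hφ, ?_⟩
  -- show convergence in t1 by contradiction
  by_contra h
  have : ∃ U ∈ @nhds X t1 x, ∃ᶠ n in Filter.atTop, (u ∘ φ) n ∉ U := by
    by_contra h'
    push_neg at h'
    apply h
    intro U hU
    have := h' U hU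
    simpa [Filter.not_frequently] using this
  obtain ⟨U, hU, hfreq⟩ := this
  obtain ⟨ψ, hψ, hψU⟩ := Filter.extraction_of_frequently_atTop hfreq
  obtain ⟨y, hy⟩ := hcc (u ∘ φ ∘ ψ)
  -- y is a t2 cluster point of u ∘ φ ∘ ψ
  have hy2 : @MapClusterPt X t2 ℕ y Filter.atTop (u ∘ φ ∘ ψ) := by
    haveI : Filter.NeBot (@nhds X t1 y ⊓ Filter.map (u ∘ φ ∘ ψ) Filter.atTop) := hy
    exact Filter.neBot_of_le (inf_le_inf_right _ (hnhds y))
  -- u ∘ φ ∘ ψ converges to x in t2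
  have hconv2 : Filter.Tendsto (u ∘ φ ∘ ψ) Filter.atTop (@nhds X t2 x) :=
    hconv.comp hψ.tendsto_atTop
  have hyx : y = x := by
    have hle : @nhds X t2 y ⊓ Filter.map (u ∘ φ ∘ ψ) Filter.atTop ≤
        @nhds X t2 y ⊓ @nhds X t2 x := inf_le_inf_left _ hconv2
    haveI : Filter.NeBot (@nhds X t2 y ⊓ Filter.map (u ∘ φ ∘ ψ) Filter.atTop) := hy2
    have : Filter.NeBot (@nhds X t2 y ⊓ @nhds X t2 x) := Filter.neBot_of_le hle
    exact @eq_of_nhds_neBot X t2 ht2haus y x this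
  rw [hyx] at hy
  -- y = x is a t1 cluster point, so U meets the subsequence values, contradiction
  have hne : Filter.NeBot (@nhds X t1 x ⊓ Filter.map (u ∘ φ ∘ ψ) Filter.atTop) := hy
  have hmem : (U ∩ Uᶜ) ∈ @nhds X t1 x ⊓ Filter.map (u ∘ φ ∘ ψ) Filter.atTop :=
    Filter.inter_mem (Filter.mem_inf_of_left hU)
      (Filter.mem_inf_of_right (Filter.mem_map.mpr
        (Filter.Eventually.of_forall (fun n => hψU n))))
  rw [Set.inter_compl_self] at hmem
  exact hne.ne (Filter.empty_mem_iff_bot.mp hmem)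
end

section
/- Let d ≥ 1 be an integer, let A be a nonempty subset of {ξ ∈ ℝ^d : ξ₁ ≥ 0}, and let R₀ : A → [0,∞) be bounded on bounded subsets of A, satisfy R₀(0) = 0 if 0 ∈ A, and satisfy limsup_{ξ∈A, |ξ|→0⁺} |ξ|⁻¹R₀(ξ) < ∞ (i.e. there exist ε > 0 and K < ∞ with R₀(ξ) ≤ K|ξ| for all ξ ∈ A with 0 < |ξ| ≤ ε). Then there exists a continuous nondecreasing super-additive function R : [0,∞) → [0,∞) with R(0) = 0 such that R₀(ξ) ≤ R(|ξ|) for all ξ ∈ A. -/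
private lemma exists_phi (D : ℕ → ℝ) (hD : Monotone D) :
    ∃ φ : ℝ → ℝ, Continuous φ ∧ Monotone φ ∧ (∀ t, D 0 ≤ φ t) ∧
      (∀ N : ℕ, ∀ t : ℝ, (N : ℝ) ≤ t → D N ≤ φ t) := by
  set term : ℕ → ℝ → ℝ := fun n t => (D (n + 1) - D n) * min 1 (max 0 (t - n)) with hterm
  have htermnn : ∀ n t, 0 ≤ term n t := by
    intro n t
    apply mul_nonneg (sub_nonneg.mpr (hD (Nat.le_succ n)))
    exact le_min zero_le_one (le_max_left _ _)
  have hterm0 : ∀ n : ℕ, ∀ t : ℝ, t ≤ n → term n t = 0 := by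
    intro n t ht
    have : max 0 (t - (n:ℝ)) = 0 := max_eq_left (by linarith)
    simp [hterm, this]
  refine ⟨fun t => D 0 + ∑' n, term n t, ?_, ?_, ?_, ?_⟩
  · -- continuity
    rw [continuous_iff_continuousAt]
    intro t
    obtain ⟨M, hM⟩ := exists_nat_gt t
    have hcont : Continuous fun s => D 0 + ∑ n ∈ Finset.range M, term n s := by
      apply continuous_const.add
      apply continuous_finset_sum
      intro n _
      exact continuous_const.mul (continuous_const.min (continuous_const.max
        ((continuous_id.sub continuous_const))))
    apply hcont.continuousAt.congr
    have hmem : Set.Iio (M : ℝ) ∈ nhds t := Iio_mem_nhds hM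
    filter_upwards [hmem] with s hs
    congr 1
    symm
    apply tsum_eq_sum
    intro n hn
    apply hterm0
    have : (M : ℝ) ≤ n := by
      exact_mod_cast Nat.le_of_lt_succ (Nat.lt_succ_of_le (Nat.le_of_not_lt (fun h => hn (Finset.mem_range.mpr h))))
    exact le_trans (le_of_lt hs) this
  · -- monotone
    intro s t hst
    obtain ⟨M, hM⟩ := exists_nat_gt t
    have hsM : s ≤ (M:ℝ) := le_trans hst hM.le
    have heqs : (∑' n, term n s) = ∑ n ∈ Finset.range M, term n s := by
      apply tsum_eq_sum; intro n hn
      exact hterm0 n s (le_trans hsM (by exact_mod_cast Nat.le_of_not_lt (fun h => hn (Finset.mem_range.mpr h))))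
    have heqt : (∑' n, term n t) = ∑ n ∈ Finset.range M, term n t := by
      apply tsum_eq_sum; intro n hn
      exact hterm0 n t (le_trans hM.le (by exact_mod_cast Nat.le_of_not_lt (fun h => hn (Finset.mem_range.mpr h))))
    simp only [heqs, heqt]
    apply add_le_add le_rfl
    apply Finset.sum_le_sum
    intro n _
    apply mul_le_mul_of_nonneg_left _ (sub_nonneg.mpr (hD (Nat.le_succ n)))
    exact min_le_min le_rfl (max_le_max le_rfl (by linarith))
  · -- lower bound by D 0
    intro t
    have : 0 ≤ ∑' n, term n t := tsum_nonneg (fun n => htermnn n t)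
    dsimp only; linarith
  · -- lower bound by D N for t ≥ N
    intro N t ht
    obtain ⟨M, hM⟩ := exists_nat_gt t
    have hNM : N ≤ M := by
      have : (N:ℝ) < M := lt_of_le_of_lt ht hM
      exact_mod_cast this.le
    have heqt : (∑' n, term n t) = ∑ n ∈ Finset.range M, term n t := by
      apply tsum_eq_sum; intro n hn
      exact hterm0 n t (le_trans hM.le (by exact_mod_cast Nat.le_of_not_lt (fun h => hn (Finset.mem_range.mpr h))))
    have h1 : ∑ n ∈ Finset.range N, term n t ≤ ∑ n ∈ Finset.range M, term n t := by
      apply Finset.sum_le_sum_of_subset_of_nonneg (Finset.range_subset_range.mpr hNM)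
      intro n _ _; exact htermnn n t
    have h2 : ∑ n ∈ Finset.range N, term n t = D N - D 0 := by
      have : ∀ n ∈ Finset.range N, term n t = D (n+1) - D n := by
        intro n hn
        have hn' : (n:ℝ) + 1 ≤ N := by exact_mod_cast Finset.mem_range.mp hn
        have hmax : max 0 (t - (n:ℝ)) = t - n := max_eq_right (by linarith)
        have hmin : min 1 (t - (n:ℝ)) = 1 := min_eq_left (by linarith)
        simp [hterm, hmax, hmin]
      rw [Finset.sum_congr rfl this, Finset.sum_range_sub]
    have : D N - D 0 ≤ ∑' n, term n t := by rw [heqt]; linarith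
    dsimp only; linarith

/-- Given a nonempty `A ⊆ {ξ ∈ ℝ^d : ξ₁ ≥ 0}` and `R₀ : A → [0,∞)` bounded on bounded
subsets, with `R₀(0) = 0` if `0 ∈ A`, and `R₀(ξ) ≤ K|ξ|` near `0`, there is a continuous
nondecreasing super-additive `R : [0,∞) → [0,∞)`, `R(0) = 0`, dominating `R₀`. -/
theorem stmt1 (d : ℕ) [NeZero d] (A : Set (EuclideanSpace ℝ (Fin d)))
    (hA : A.Nonempty) (hA0 : ∀ ξ ∈ A, 0 ≤ ξ 0)
    (R₀ : EuclideanSpace ℝ (Fin d) → ℝ)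
    (hR₀nonneg : ∀ ξ ∈ A, 0 ≤ R₀ ξ)
    (hR₀bdd : ∀ M : ℝ, ∃ K : ℝ, ∀ ξ ∈ A, ‖ξ‖ ≤ M → R₀ ξ ≤ K)
    (hR₀zero : (0 : EuclideanSpace ℝ (Fin d)) ∈ A → R₀ 0 = 0)
    (hlimsup : ∃ ε > (0:ℝ), ∃ K : ℝ, ∀ ξ ∈ A, 0 < ‖ξ‖ → ‖ξ‖ ≤ ε → R₀ ξ ≤ K * ‖ξ‖) :
    ∃ R : ℝ → ℝ,
      ContinuousOn R (Set.Ici 0) ∧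
      MonotoneOn R (Set.Ici 0) ∧
      (∀ t : ℝ, 0 ≤ t → 0 ≤ R t) ∧
      R 0 = 0 ∧
      (∀ a b : ℝ, 0 ≤ a → 0 ≤ b → R a + R b ≤ R (a + b)) ∧
      (∀ ξ ∈ A, R₀ ξ ≤ R ‖ξ‖) := by
  obtain ⟨ε, hε, K, hK⟩ := hlimsup
  choose Kf hKf using hR₀bdd
  set B : ℕ → ℝ := fun n => max 0 (Kf ((n:ℝ) + 1)) with hBdef
  have hB : ∀ n : ℕ, ∀ ξ ∈ A, ‖ξ‖ ≤ (n:ℝ) + 1 → R₀ ξ ≤ B n :=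
    fun n ξ hξ h => le_trans (hKf ((n:ℝ)+1) ξ hξ h) (le_max_right _ _)
  have hBnn : ∀ n, 0 ≤ B n := fun n => le_max_left _ _
  set c₀ : ℝ := max (max K (B 0 / ε)) 0 with hc₀def
  have hc₀nn : 0 ≤ c₀ := le_max_right _ _
  have hc₀K : K ≤ c₀ := le_trans (le_max_left _ _) (le_max_left _ _)
  have hc₀B : B 0 / ε ≤ c₀ := le_trans (le_max_right _ _) (le_max_left _ _)
  set D : ℕ → ℝ := fun n => Nat.rec c₀ (fun k Dk => max Dk (B (k+1) / ((k:ℝ)+1))) n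
    with hDdef
  have hD0 : D 0 = c₀ := rfl
  have hDsucc : ∀ n, D (n+1) = max (D n) (B (n+1) / ((n:ℝ)+1)) := fun n => rfl
  have hDmono : Monotone D := by
    apply monotone_nat_of_le_succ
    intro n; rw [hDsucc]; exact le_max_left _ _
  have hDnn : ∀ n, 0 ≤ D n := fun n => le_trans (hD0 ▸ hc₀nn) (hDmono (Nat.zero_le n))
  have hDB : ∀ n : ℕ, B (n+1) / ((n:ℝ)+1) ≤ D (n+1) := by
    intro n; rw [hDsucc]; exact le_max_right _ _
  obtain ⟨φ, hφcont, hφmono, hφ0, hφN⟩ := exists_phi D hDmono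
  have hφnn : ∀ t, 0 ≤ φ t := fun t => le_trans (hD0 ▸ hc₀nn) (hφ0 t)
  have hφc₀ : ∀ t, c₀ ≤ φ t := fun t => hD0 ▸ hφ0 t
  refine ⟨fun t => t * φ t, ?_, ?_, ?_, ?_, ?_, ?_⟩
  · exact (continuous_id.mul hφcont).continuousOn
  · intro s hs t ht hst
    exact mul_le_mul hst (hφmono hst) (hφnn s) ht
  · intro t ht; exact mul_nonneg ht (hφnn t)
  · simp
  · intro a b ha hb
    have h1 : a * φ a ≤ a * φ (a + b) :=
      mul_le_mul_of_nonneg_left (hφmono (by linarith)) ha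
    have h2 : b * φ b ≤ b * φ (a + b) :=
      mul_le_mul_of_nonneg_left (hφmono (by linarith)) hb
    have : a * φ (a+b) + b * φ (a+b) = (a+b) * φ (a+b) := by ring
    dsimp only; linarith
  · intro ξ hξ
    rcases eq_or_lt_of_le (norm_nonneg ξ) with h0 | h0
    · -- ‖ξ‖ = 0
      have hξ0 : ξ = 0 := norm_eq_zero.mp h0.symm
      rw [hξ0, hR₀zero (hξ0 ▸ hξ)]
      simp
    rcases le_or_gt ‖ξ‖ ε with hle | hgt
    · -- small
      calc R₀ ξ ≤ K * ‖ξ‖ := hK ξ hξ h0 hle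
        _ ≤ c₀ * ‖ξ‖ := mul_le_mul_of_nonneg_right hc₀K h0.le
        _ ≤ φ ‖ξ‖ * ‖ξ‖ := mul_le_mul_of_nonneg_right (hφc₀ _) h0.le
        _ = ‖ξ‖ * φ ‖ξ‖ := mul_comm _ _
    rcases le_or_gt ‖ξ‖ 1 with hle1 | hgt1
    · -- ε < ‖ξ‖ ≤ 1
      have h1 : R₀ ξ ≤ B 0 := hB 0 ξ hξ (by push_cast; linarith)
      have h2 : B 0 ≤ c₀ * ε := by
        rw [div_le_iff₀ hε] at hc₀B
        linarith
      calc R₀ ξ ≤ c₀ * ε := le_trans h1 h2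
        _ ≤ c₀ * ‖ξ‖ := mul_le_mul_of_nonneg_left hgt.le hc₀nn
        _ ≤ φ ‖ξ‖ * ‖ξ‖ := mul_le_mul_of_nonneg_right (hφc₀ _) h0.le
        _ = ‖ξ‖ * φ ‖ξ‖ := mul_comm _ _
    · -- ‖ξ‖ > 1
      set n : ℕ := ⌊‖ξ‖⌋₊ with hn
      have hn1 : 1 ≤ n := Nat.one_le_iff_ne_zero.mpr (by
        intro h
        have := Nat.floor_eq_zero.mp h
        linarith)
      have hnle : (n:ℝ) ≤ ‖ξ‖ := Nat.floor_le (norm_nonneg ξ)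
      have hltn : ‖ξ‖ < (n:ℝ) + 1 := Nat.lt_floor_add_one _
      have hnpos : (0:ℝ) < n := by exact_mod_cast hn1
      have h1 : R₀ ξ ≤ B n := hB n ξ hξ hltn.le
      have h2 : B n / (n:ℝ) ≤ D n := by
        obtain ⟨m, hm⟩ := Nat.exists_eq_add_of_le hn1
        have hm' : n = m + 1 := by omega
        rw [hm']
        have := hDB m
        have he : ((m+1:ℕ):ℝ) = (m:ℝ) + 1 := by push_cast; ring
        rw [he]
        exact this
      have h3 : B n ≤ D n * n := by
        rw [div_le_iff₀ hnpos] at h2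
        linarith
      have h4 : D n ≤ φ ‖ξ‖ := hφN n ‖ξ‖ hnle
      calc R₀ ξ ≤ D n * n := le_trans h1 h3
        _ ≤ φ ‖ξ‖ * ‖ξ‖ := mul_le_mul h4 hnle (hnpos.le) (hφnn _)
        _ = ‖ξ‖ * φ ‖ξ‖ := mul_comm _ _
end

section
/- For every δ ∈ (0,1], every nondecreasing M : ℕ → [1,∞), every μ₀ ∈ C^ndc_δ, every ν₀ ∈ C^ndc_0 and every continuous nonincreasing κ : [0,∞) → (0,1], there exist μ₁ ∈ C^ndc_δ and ν₁ ∈ C^ndc_0 such that: (i) μ₀(l) ≤ μ₁(l) for all l ≥ 0, and 2μ₁(l−δ) ≤ μ₁(l) for all l ≥ 4δ; (ii) ν₀(l) ≤ κ(l)·ν₁(l) for all l ≥ 0, and the function l ↦ κ(l)·ν₁(l) is nondecreasing (so κ·ν₁ ∈ C^ndc_0); (iii) for every l > 0 there exists ε ∈ (0,δ/2] such that 9·ν₁(2ε)·ν₁(l) ≤ κ(l)·ν₁(l) and, if 2ε < l, 9·ν₁(l−ε)² ≤ κ(l)·ν₁(l); (iv) for every l > 4δ, 3·[M(⌊μ₁(l−δ)⌋)·ν₁(l−δ)]²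 ≤ κ(l)·ν₁(l). -/
set_option maxHeartbeats 1000000

open Set

lemma supAux_closed {b : ℝ} {f h : ℝ → ℝ} (hf : ContinuousOn f (Set.Icc 0 b))
    (hh : ContinuousOn h (Set.Icc 0 b)) :
    IsClosed {t | t ∈ Set.Icc 0 b ∧ f t ≤ h t} := by
  have : {t | t ∈ Set.Icc 0 b ∧ f t ≤ h t}
      = Set.Icc 0 b ∩ (fun t => f t - h t) ⁻¹' Set.Iic 0 := by
    ext t; simp [sub_nonpos]
  rw [this]
  exact (hf.sub hh).preimage_isClosed_of_isClosed isClosed_Icc isClosed_Iic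

lemma supAux_mem {b : ℝ} {f h : ℝ → ℝ} (hb : 0 < b) (hf : ContinuousOn f (Set.Icc 0 b))
    (hh : ContinuousOn h (Set.Icc 0 b)) (h0 : f 0 ≤ h 0) :
    sSup {t | t ∈ Set.Icc 0 b ∧ f t ≤ h t} ∈ {t | t ∈ Set.Icc 0 b ∧ f t ≤ h t} := by
  have hmem : (0:ℝ) ∈ {t | t ∈ Set.Icc 0 b ∧ f t ≤ h t} := ⟨⟨le_refl _, hb.le⟩, h0⟩
  exact (supAux_closed hf hh).csSup_mem ⟨0, hmem⟩ ⟨b, fun x hx => hx.1.2⟩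

lemma supAux_pos {b : ℝ} {f h : ℝ → ℝ} (hb : 0 < b) (hf : ContinuousOn f (Set.Icc 0 b))
    (hh : ContinuousOn h (Set.Icc 0 b)) (h0 : f 0 < h 0) :
    0 < sSup {t | t ∈ Set.Icc 0 b ∧ f t ≤ h t} := by
  have hne : 0 ∈ Set.Icc (0:ℝ) b := ⟨le_refl _, hb.le⟩
  have hcw : ContinuousWithinAt (fun t => f t - h t) (Set.Icc 0 b) 0 := (hf.sub hh) 0 hne
  have hev : ∀ᶠ t in nhdsWithin 0 (Set.Icc 0 b), f t - h t < 0 :=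
    Filter.Tendsto.eventually_lt_const (by simpa using h0) hcw
  have hle : nhdsWithin (0:ℝ) (Set.Ioc 0 b) ≤ nhdsWithin 0 (Set.Icc 0 b) :=
    nhdsWithin_mono _ Set.Ioc_subset_Icc_self
  have hev2 : ∀ᶠ t in nhdsWithin (0:ℝ) (Set.Ioc 0 b), f t - h t < 0 := hev.filter_mono hle
  have hself : ∀ᶠ t in nhdsWithin (0:ℝ) (Set.Ioc 0 b), t ∈ Set.Ioc 0 b :=
    self_mem_nhdsWithin
  have hnb : (nhdsWithin (0:ℝ) (Set.Ioc 0 b)).NeBot := by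
    rw [nhdsWithin_Ioc_eq_nhdsGT hb]
    infer_instance
  obtain ⟨t, ht1, ht2⟩ := (hev2.and hself).exists
  have : t ∈ {t | t ∈ Set.Icc 0 b ∧ f t ≤ h t} :=
    ⟨⟨ht2.1.le, ht2.2⟩, by linarith⟩
  calc (0:ℝ) < t := ht2.1
  _ ≤ _ := le_csSup ⟨b, fun x hx => hx.1.2⟩ this

lemma growthAux {x y c : ℝ} (hx : 1 ≤ x) (hc : 1 ≤ c)
    (hxy : Real.exp (2 + Real.log (1 + c)) * x ≤ y) :
    c * (Real.exp (x - 1))^2 ≤ Real.exp (y - 1) - 1 := by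
  have hc0 : (0:ℝ) < 1 + c := by linarith
  have hxy' : Real.exp 2 * (1 + c) * x ≤ y := by
    rwa [Real.exp_add, Real.exp_log hc0] at hxy
  have hexp2 : (3:ℝ) ≤ Real.exp 2 := by
    have := Real.add_one_le_exp (2:ℝ); linarith
  have h3 : 3 * (1 + c) * x ≤ y := by
    nlinarith [mul_nonneg (mul_nonneg (sub_nonneg.2 hexp2) (by linarith : (0:ℝ) ≤ 1 + c))
      (by linarith : (0:ℝ) ≤ x)]
  have hlc : Real.log c ≤ c - 1 := Real.log_le_sub_one_of_pos (by linarith)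
  have hlog2 : Real.log 2 ≤ 1 := by
    have := Real.log_le_sub_one_of_pos (by norm_num : (0:ℝ) < 2); linarith
  have h1 : Real.log 2 + Real.log c + 2 * x - 2 ≤ y - 1 := by nlinarith
  have h2 : 2 * c * Real.exp (2 * x - 2) ≤ Real.exp (y - 1) := by
    have : Real.exp (Real.log 2 + Real.log c + (2 * x - 2)) ≤ Real.exp (y - 1) :=
      Real.exp_le_exp.2 (by linarith)
    rw [Real.exp_add, Real.exp_add, Real.exp_log (by norm_num : (0:ℝ) < 2),
      Real.exp_log (by linarith : (0:ℝ) < c)] at this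
    linarith [this]
  have hE1 : (1:ℝ) ≤ Real.exp (2 * x - 2) := by
    rw [show (1:ℝ) = Real.exp 0 by simp]
    exact Real.exp_le_exp.2 (by linarith)
  have hsq : (Real.exp (x - 1))^2 = Real.exp (2 * x - 2) := by
    rw [sq, ← Real.exp_add]; ring_nf
  rw [hsq]
  nlinarith



/-- C^ndc : continuous nondecreasing [0,∞) → [0,∞) -/
def CNdc (f : ℝ → ℝ) : Prop :=
  ContinuousOn f (Set.Ici 0) ∧ MonotoneOn f (Set.Ici 0) ∧ ∀ t : ℝ, 0 ≤ t → 0 ≤ f t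

/-- C^ndc_0 -/
def CNdc0 (f : ℝ → ℝ) : Prop := CNdc f ∧ f 0 = 0

/-- C^ndc_δ -/
def CNdcDelta (δ : ℝ) (f : ℝ → ℝ) : Prop :=
  CNdc f ∧ f 0 = 0 ∧ ∀ t : ℝ, 0 ≤ t → t ≤ 2*δ → f t ≤ 1/2

noncomputable def mu1 (δ : ℝ) (μ₀ : ℝ → ℝ) : ℝ → ℝ := fun l =>
  μ₀ l + (max (Real.exp (((l - 2*δ)/δ) * Real.log 2) - 1) 0) * (1/2 + μ₀ l)

lemma mu1_ge (δ : ℝ) (μ₀ : ℝ → ℝ) (hμ₀ : CNdcDelta δ μ₀) :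
    ∀ l : ℝ, 0 ≤ l → μ₀ l ≤ mu1 δ μ₀ l := by
  intro l hl
  have h1 : 0 ≤ μ₀ l := hμ₀.1.2.2 l hl
  have h2 : (0:ℝ) ≤ max (Real.exp (((l - 2*δ)/δ) * Real.log 2) - 1) 0 := le_max_right _ _
  have : 0 ≤ (max (Real.exp (((l - 2*δ)/δ) * Real.log 2) - 1) 0) * (1/2 + μ₀ l) := by
    apply mul_nonneg h2; linarith
  simp only [mu1]; linarith

lemma mu1_cndc (δ : ℝ) (hδ : 0 < δ) (μ₀ : ℝ → ℝ) (hμ₀ : CNdcDelta δ μ₀) :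
    CNdcDelta δ (mu1 δ μ₀) := by
  obtain ⟨⟨hc, hm, hnn⟩, h0, hhalf⟩ := hμ₀
  have hgm : Monotone fun l : ℝ => max (Real.exp (((l - 2*δ)/δ) * Real.log 2) - 1) 0 := by
    intro a b hab
    apply max_le_max _ (le_refl _)
    have h : (a - 2*δ)/δ * Real.log 2 ≤ (b - 2*δ)/δ * Real.log 2 := by
      apply mul_le_mul_of_nonneg_right _ (Real.log_nonneg (by norm_num))
      exact (div_le_div_iff_of_pos_right hδ).2 (by linarith)
    simp only [sub_le_sub_iff_right]
    exact Real.exp_le_exp.2 h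
  have hgnn : ∀ l : ℝ, (0:ℝ) ≤ max (Real.exp (((l - 2*δ)/δ) * Real.log 2) - 1) 0 :=
    fun l => le_max_right _ _
  have hg0 : ∀ l : ℝ, l ≤ 2*δ → max (Real.exp (((l - 2*δ)/δ) * Real.log 2) - 1) 0 = 0 := by
    intro l hl
    apply max_eq_right
    have h1 : (l - 2*δ)/δ * Real.log 2 ≤ 0 := by
      apply mul_nonpos_of_nonpos_of_nonneg
      · apply div_nonpos_of_nonpos_of_nonneg (by linarith) hδ.le
      · exact Real.log_nonneg (by norm_num)
    have := Real.exp_le_one_iff.2 h1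
    linarith
  refine ⟨⟨?_, ?_, ?_⟩, ?_, ?_⟩
  · apply ContinuousOn.add hc
    apply ContinuousOn.mul
    · apply Continuous.continuousOn
      apply Continuous.max _ continuous_const
      exact (Real.continuous_exp.comp (by continuity)).sub continuous_const
    · exact (continuousOn_const.add hc)
  · intro a ha b hb hab
    simp only [mu1]
    have h1 : μ₀ a ≤ μ₀ b := hm ha hb hab
    have h2 := hgm hab
    have h3 := hgnn a
    have h4 : (0:ℝ) ≤ 1/2 + μ₀ a := by have := hnn a ha; linarith
    have h5 : (1:ℝ)/2 + μ₀ a ≤ 1/2 + μ₀ b := by linarith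
    have := mul_le_mul h2 h5 h4 (le_trans h3 h2)
    linarith
  · intro t ht
    have := mul_nonneg (hgnn t) (by have := hnn t ht; linarith : (0:ℝ) ≤ 1/2 + μ₀ t)
    have := hnn t ht
    simp only [mu1]; linarith
  · simp only [mu1, hg0 0 (by linarith), h0]; ring
  · intro t ht ht2
    simp only [mu1, hg0 t ht2]
    have := hhalf t ht ht2
    linarith

lemma mu1_double (δ : ℝ) (hδ : 0 < δ) (μ₀ : ℝ → ℝ) (hμ₀ : CNdcDelta δ μ₀) :
    ∀ l : ℝ, 4*δ ≤ l → 2 * mu1 δ μ₀ (l - δ) ≤ mu1 δ μ₀ l := by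
  intro l hl
  obtain ⟨⟨hc, hm, hnn⟩, h0, hhalf⟩ := hμ₀
  set a := Real.exp (((l - 3*δ)/δ) * Real.log 2) with ha
  have hexp2 : Real.exp (((l - 2*δ)/δ) * Real.log 2) = 2 * a := by
    have hdiv : (l - 2*δ)/δ * Real.log 2 = (l - 3*δ)/δ * Real.log 2 + Real.log 2 := by
      field_simp; ring
    rw [ha, hdiv, Real.exp_add, Real.exp_log (by norm_num : (0:ℝ) < 2)]; ring
  have ha2 : (2:ℝ) ≤ a := by
    rw [ha]
    calc (2:ℝ) = Real.exp (Real.log 2) := (Real.exp_log (by norm_num)).symm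
    _ ≤ _ := by
        apply Real.exp_le_exp.2
        have h1 : (1:ℝ) ≤ (l - 3*δ)/δ := by
          rw [le_div_iff₀ hδ]; linarith
        nlinarith [Real.log_nonneg (by norm_num : (1:ℝ) ≤ 2)]
  have hmax1 : max (Real.exp (((l - 2*δ)/δ) * Real.log 2) - 1) 0
      = 2 * a - 1 := by
    rw [hexp2]; apply max_eq_left; linarith
  have hmax2 : max (Real.exp (((l - δ - 2*δ)/δ) * Real.log 2) - 1) 0 = a - 1 := by
    have : (l - δ - 2*δ)/δ = (l - 3*δ)/δ := by ring_nf
    rw [this, ← ha]; apply max_eq_left; linarith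
  have hm1 : μ₀ (l - δ) ≤ μ₀ l := hm (by simp only [Set.mem_Ici]; linarith)
    (by simp only [Set.mem_Ici]; linarith) (by linarith)
  have hm0 : 0 ≤ μ₀ (l - δ) := hnn _ (by linarith)
  simp only [mu1, hmax1, hmax2]
  nlinarith [mul_nonneg (by linarith : (0:ℝ) ≤ 2*a - 2) (by linarith : (0:ℝ) ≤ μ₀ l - μ₀ (l - δ))]

structure Hyp (δ : ℝ) (M : ℕ → ℝ) (μ₀ ν₀ κ : ℝ → ℝ) : Prop where
  hδ0 : 0 < δ
  hδ1 : δ ≤ 1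
  hM : Monotone M
  hM1 : ∀ n, 1 ≤ M n
  hμ₀ : CNdcDelta δ μ₀
  hν₀ : CNdc0 ν₀
  hκc : ContinuousOn κ (Set.Ici 0)
  hκm : AntitoneOn κ (Set.Ici 0)
  hκr : ∀ t, 0 ≤ t → κ t ∈ Set.Ioc (0:ℝ) 1

namespace Hyp

variable {δ : ℝ} {M : ℕ → ℝ} {μ₀ ν₀ κ : ℝ → ℝ} (H : Hyp δ M μ₀ ν₀ κ)
include H

lemma kpos {t : ℝ} (ht : 0 ≤ t) : 0 < κ t := (H.hκr t ht).1
lemma kle1 {t : ℝ} (ht : 0 ≤ t) : κ t ≤ 1 := (H.hκr t ht).2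
lemma nupos {t : ℝ} (ht : 0 ≤ t) : 0 ≤ ν₀ t := H.hν₀.1.2.2 t ht

lemma nuHat_cont : ContinuousOn (fun t => ν₀ t / κ t) (Set.Ici 0) :=
  H.hν₀.1.1.div H.hκc (fun t ht => (H.kpos ht).ne')

lemma nuHat_mono : MonotoneOn (fun t => ν₀ t / κ t) (Set.Ici 0) := by
  intro a ha b hb hab
  exact div_le_div₀ (H.nupos hb) (H.hν₀.1.2.1 ha hb hab) (H.kpos hb) (H.hκm ha hb hab)

lemma nuHat_zero : ν₀ 0 / κ 0 = 0 := by rw [H.hν₀.2, zero_div]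

end Hyp

noncomputable section

def sigma0 (δ : ℝ) (ν₀ κ : ℝ → ℝ) : ℝ :=
  sSup {t | t ∈ Set.Icc 0 δ ∧ ν₀ t / κ t ≤ κ (t + δ/2) / 9}

def tHat (δ : ℝ) (ν₀ κ : ℝ → ℝ) (l : ℝ) : ℝ :=
  sSup {t | t ∈ Set.Icc 0 (sigma0 δ ν₀ κ) ∧ ν₀ t / κ t ≤ κ l / 9}

def innerC (δ : ℝ) (M : ℕ → ℝ) (μ₀ ν₀ κ : ℝ → ℝ) (l : ℝ) : ℝ :=
  (9 + 3 * (M ⌊mu1 δ μ₀ l⌋₊)^2) * ((1 + ν₀ l)/κ l)^2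

def Dfun (δ : ℝ) (M : ℕ → ℝ) (μ₀ ν₀ κ : ℝ → ℝ) (l : ℝ) : ℝ :=
  2 + Real.log (1 + innerC δ M μ₀ ν₀ κ l)

def phi (δ : ℝ) (M : ℕ → ℝ) (μ₀ ν₀ κ : ℝ → ℝ) (s : ℝ) : ℝ :=
  if s < sigma0 δ ν₀ κ then 0
  else 2 * Dfun δ M μ₀ ν₀ κ (s + δ) / tHat δ ν₀ κ (s + δ)

def Vfun (δ : ℝ) (M : ℕ → ℝ) (μ₀ ν₀ κ : ℝ → ℝ) (l : ℝ) : ℝ :=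
  ∫ t in (0:ℝ)..l, phi δ M μ₀ ν₀ κ t

def Efun (δ : ℝ) (M : ℕ → ℝ) (μ₀ ν₀ κ : ℝ → ℝ) (l : ℝ) : ℝ :=
  Real.exp (Real.exp (Vfun δ M μ₀ ν₀ κ l) - 1)

def Qfun (δ : ℝ) (M : ℕ → ℝ) (μ₀ ν₀ κ : ℝ → ℝ) (l : ℝ) : ℝ :=
  ν₀ l + (Efun δ M μ₀ ν₀ κ l - 1)

def nu1 (δ : ℝ) (M : ℕ → ℝ) (μ₀ ν₀ κ : ℝ → ℝ) (l : ℝ) : ℝ :=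
  Qfun δ M μ₀ ν₀ κ l / κ l

end

namespace Hyp

variable {δ : ℝ} {M : ℕ → ℝ} {μ₀ ν₀ κ : ℝ → ℝ} (H : Hyp δ M μ₀ ν₀ κ)
include H

lemma sigma0_spec : sigma0 δ ν₀ κ ∈ Set.Icc 0 δ ∧
    ν₀ (sigma0 δ ν₀ κ) / κ (sigma0 δ ν₀ κ) ≤ κ (sigma0 δ ν₀ κ + δ/2) / 9 := by
  have h := supAux_mem (b := δ) (f := fun t => ν₀ t / κ t)
    (h := fun t => κ (t + δ/2) / 9) H.hδ0
    (H.nuHat_cont.mono (fun t ht => ht.1))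
    (((H.hκc.comp (by fun_prop) (fun t (ht : t ∈ Set.Icc 0 δ) =>
        by simp only [Set.mem_Ici]; linarith [ht.1, H.hδ0])).div_const 9))
    (by show ν₀ 0 / κ 0 ≤ κ (0 + δ/2) / 9
        rw [H.nuHat_zero]
        have := H.kpos (by linarith [H.hδ0] : (0:ℝ) ≤ 0 + δ/2)
        positivity)
  exact h

lemma sigma0_pos : 0 < sigma0 δ ν₀ κ := by
  apply supAux_pos (b := δ) (f := fun t => ν₀ t / κ t)
    (h := fun t => κ (t + δ/2) / 9) H.hδ0
    (H.nuHat_cont.mono (fun t ht => ht.1))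
    (((H.hκc.comp (by fun_prop) (fun t (ht : t ∈ Set.Icc 0 δ) =>
        by simp only [Set.mem_Ici]; linarith [ht.1, H.hδ0])).div_const 9))
  show ν₀ 0 / κ 0 < κ (0 + δ/2) / 9
  rw [H.nuHat_zero]
  have := H.kpos (by linarith [H.hδ0] : (0:ℝ) ≤ 0 + δ/2)
  positivity

lemma sigma0_le : sigma0 δ ν₀ κ ≤ δ := H.sigma0_spec.1.2

lemma tHat_spec {l : ℝ} (hl : 0 ≤ l) : tHat δ ν₀ κ l ∈ Set.Icc 0 (sigma0 δ ν₀ κ) ∧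
    ν₀ (tHat δ ν₀ κ l) / κ (tHat δ ν₀ κ l) ≤ κ l / 9 := by
  have h := supAux_mem (b := sigma0 δ ν₀ κ) (f := fun t => ν₀ t / κ t)
    (h := fun _ => κ l / 9) H.sigma0_pos
    (H.nuHat_cont.mono (fun t ht => ht.1)) continuousOn_const
    (by show ν₀ 0 / κ 0 ≤ κ l / 9
        rw [H.nuHat_zero]
        have := H.kpos hl
        positivity)
  exact h

lemma tHat_pos {l : ℝ} (hl : 0 ≤ l) : 0 < tHat δ ν₀ κ l := by
  apply supAux_pos (b := sigma0 δ ν₀ κ) (f := fun t => ν₀ t / κ t)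
    (h := fun _ => κ l / 9) H.sigma0_pos
    (H.nuHat_cont.mono (fun t ht => ht.1)) continuousOn_const
  show ν₀ 0 / κ 0 < κ l / 9
  rw [H.nuHat_zero]
  have := H.kpos hl
  positivity

lemma tHat_anti {l l' : ℝ} (hl : 0 ≤ l) (hll' : l ≤ l') : tHat δ ν₀ κ l' ≤ tHat δ ν₀ κ l := by
  have hl' : (0:ℝ) ≤ l' := le_trans hl hll'
  apply csSup_le_csSup
  · exact ⟨sigma0 δ ν₀ κ, fun x hx => hx.1.2⟩
  · exact ⟨tHat δ ν₀ κ l', (H.tHat_spec hl').1, (H.tHat_spec hl').2⟩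
  · intro x hx
    refine ⟨hx.1, le_trans hx.2 ?_⟩
    have := H.hκm (Set.mem_Ici.2 hl) (Set.mem_Ici.2 hl') hll'
    linarith

lemma innerC_mono : MonotoneOn (innerC δ M μ₀ ν₀ κ) (Set.Ici 0) := by
  intro a ha b hb hab
  simp only [Set.mem_Ici] at ha hb
  have hmu : MonotoneOn (mu1 δ μ₀) (Set.Ici 0) := (mu1_cndc δ H.hδ0 μ₀ H.hμ₀).1.2.1
  have hM1 : (1:ℝ) ≤ M ⌊mu1 δ μ₀ a⌋₊ := H.hM1 _
  have hMab : M ⌊mu1 δ μ₀ a⌋₊ ≤ M ⌊mu1 δ μ₀ b⌋₊ :=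
    H.hM (Nat.floor_mono (hmu ha hb hab))
  have hr1 : (1:ℝ) ≤ (1 + ν₀ a)/κ a := by
    rw [le_div_iff₀ (H.kpos ha)]
    have := H.kle1 ha; have := H.nupos ha; linarith
  have hrab : (1 + ν₀ a)/κ a ≤ (1 + ν₀ b)/κ b := by
    apply div_le_div₀ _ _ (H.kpos hb) (H.hκm ha hb hab)
    · have := H.nupos hb; linarith
    · have := H.hν₀.1.2.1 ha hb hab; linarith
  unfold innerC
  have h1 : (M ⌊mu1 δ μ₀ a⌋₊)^2 ≤ (M ⌊mu1 δ μ₀ b⌋₊)^2 := by nlinarith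
  have h2 : ((1 + ν₀ a)/κ a)^2 ≤ ((1 + ν₀ b)/κ b)^2 := by nlinarith
  nlinarith [sq_nonneg (M ⌊mu1 δ μ₀ a⌋₊), sq_nonneg ((1 + ν₀ a)/κ a)]

lemma innerC_ge9 {l : ℝ} (hl : 0 ≤ l) : 9 ≤ innerC δ M μ₀ ν₀ κ l := by
  have hM1 : (1:ℝ) ≤ M ⌊mu1 δ μ₀ l⌋₊ := H.hM1 _
  have hr1 : (1:ℝ) ≤ (1 + ν₀ l)/κ l := by
    rw [le_div_iff₀ (H.kpos hl)]
    have := H.kle1 hl; have := H.nupos hl; linarith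
  unfold innerC
  nlinarith

lemma Dfun_ge2 {l : ℝ} (hl : 0 ≤ l) : 2 ≤ Dfun δ M μ₀ ν₀ κ l := by
  unfold Dfun
  have := H.innerC_ge9 hl
  have := Real.log_nonneg (by linarith : (1:ℝ) ≤ 1 + innerC δ M μ₀ ν₀ κ l)
  linarith

lemma Dfun_mono : MonotoneOn (Dfun δ M μ₀ ν₀ κ) (Set.Ici 0) := by
  intro a ha b hb hab
  unfold Dfun
  have h9a := H.innerC_ge9 ha
  have := H.innerC_mono ha hb hab
  have := Real.log_le_log (x := 1 + innerC δ M μ₀ ν₀ κ a) (y := 1 + innerC δ M μ₀ ν₀ κ b) (by linarith) (by linarith)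
  linarith

lemma Dfun_ge_log {l c : ℝ} (hl : 0 ≤ l) (hc : c ≤ innerC δ M μ₀ ν₀ κ l) (hc0 : 0 ≤ c) :
    2 + Real.log (1 + c) ≤ Dfun δ M μ₀ ν₀ κ l := by
  unfold Dfun
  have := Real.log_le_log (x := 1 + c) (y := 1 + innerC δ M μ₀ ν₀ κ l)
    (by linarith) (by linarith)
  linarith

lemma phi_eq {s : ℝ} (hs : sigma0 δ ν₀ κ ≤ s) :
    phi δ M μ₀ ν₀ κ s = 2 * Dfun δ M μ₀ ν₀ κ (s + δ) / tHat δ ν₀ κ (s + δ) :=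
  if_neg (not_lt.2 hs)

lemma phi_nonneg (s : ℝ) : 0 ≤ phi δ M μ₀ ν₀ κ s := by
  unfold phi
  split
  · exact le_refl 0
  · rename_i hs
    push_neg at hs
    have hs0 : (0:ℝ) ≤ s + δ := by
      have := H.sigma0_pos; have := H.hδ0; linarith
    have hD := H.Dfun_ge2 hs0
    have ht := H.tHat_pos hs0
    positivity

lemma phi_mono : Monotone (phi δ M μ₀ ν₀ κ) := by
  intro a b hab
  by_cases hb : b < sigma0 δ ν₀ κ
  · have ha : a < sigma0 δ ν₀ κ := lt_of_le_of_lt hab hb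
    unfold phi
    rw [if_pos ha, if_pos hb]
  · push_neg at hb
    by_cases ha : a < sigma0 δ ν₀ κ
    · unfold phi
      rw [if_pos ha]
      have := H.phi_nonneg b
      unfold phi at this
      exact this
    · push_neg at ha
      rw [H.phi_eq ha, H.phi_eq hb]
      have ha0 : (0:ℝ) ≤ a + δ := by
        have := H.sigma0_pos; have := H.hδ0; linarith
      have hb0 : (0:ℝ) ≤ b + δ := by linarith
      apply div_le_div₀
      · have := H.Dfun_ge2 hb0; linarith
      · have := H.Dfun_mono (Set.mem_Ici.2 ha0) (Set.mem_Ici.2 hb0) (by linarith); linarith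
      · exact H.tHat_pos hb0
      · exact H.tHat_anti ha0 (by linarith)

lemma Vint (a b : ℝ) : IntervalIntegrable (phi δ M μ₀ ν₀ κ) MeasureTheory.volume a b :=
  H.phi_mono.intervalIntegrable

lemma Vcont : Continuous (Vfun δ M μ₀ ν₀ κ) :=
  intervalIntegral.continuous_primitive H.Vint 0

lemma Vdiff {a b : ℝ} (hab : a ≤ b) :
    Vfun δ M μ₀ ν₀ κ b - Vfun δ M μ₀ ν₀ κ a = ∫ t in a..b, phi δ M μ₀ ν₀ κ t := by
  have h := intervalIntegral.integral_add_adjacent_intervals (H.Vint 0 a) (H.Vint a b)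
  unfold Vfun
  linarith [h]

lemma Vmono : Monotone (Vfun δ M μ₀ ν₀ κ) := by
  intro a b hab
  have h := H.Vdiff hab
  have h2 : 0 ≤ ∫ t in a..b, phi δ M μ₀ ν₀ κ t :=
    intervalIntegral.integral_nonneg hab (fun x _ => H.phi_nonneg x)
  linarith

lemma Vzero_lt {l : ℝ} (hl : l < sigma0 δ ν₀ κ) : Vfun δ M μ₀ ν₀ κ l = 0 := by
  unfold Vfun
  have heq : Set.EqOn (phi δ M μ₀ ν₀ κ) (fun _ => (0:ℝ)) (Set.uIcc 0 l) := by
    intro s hs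
    have hs2 : s ≤ max 0 l := (Set.mem_uIcc.1 hs).elim (fun h => le_max_of_le_right h.2)
      (fun h => le_max_of_le_left h.2)
    have : s < sigma0 δ ν₀ κ := by
      rcases le_or_gt l 0 with h | h
      · have : max 0 l = 0 := max_eq_left h
        rw [this] at hs2
        exact lt_of_le_of_lt hs2 H.sigma0_pos
      · have : max 0 l = l := max_eq_right h.le
        rw [this] at hs2
        exact lt_of_le_of_lt hs2 hl
    exact if_pos this
  rw [intervalIntegral.integral_congr heq]
  simp

lemma Vzero {l : ℝ} (hl : l ≤ sigma0 δ ν₀ κ) : Vfun δ M μ₀ ν₀ κ l = 0 := by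
  rcases lt_or_eq_of_le hl with h | h
  · exact H.Vzero_lt h
  · rw [h]
    have heq : Set.EqOn (Vfun δ M μ₀ ν₀ κ) (fun _ => (0:ℝ)) (Set.Iio (sigma0 δ ν₀ κ)) :=
      fun x hx => H.Vzero_lt hx
    have hcl := heq.closure H.Vcont continuous_const
    exact hcl (by rw [closure_Iio]; exact Set.mem_Iic.2 le_rfl)

lemma Vnonneg (l : ℝ) : 0 ≤ Vfun δ M μ₀ ν₀ κ l := by
  rcases le_or_gt l 0 with h | h
  · rw [H.Vzero (le_trans h H.sigma0_pos.le)]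
  · have h0 : Vfun δ M μ₀ ν₀ κ 0 = 0 := H.Vzero H.sigma0_pos.le
    have := H.Vmono h.le
    linarith

lemma Vinc {c l : ℝ} (hc : 0 < c) (hl : sigma0 δ ν₀ κ ≤ l - c) :
    c * phi δ M μ₀ ν₀ κ (l - c) ≤ Vfun δ M μ₀ ν₀ κ l - Vfun δ M μ₀ ν₀ κ (l - c) := by
  rw [H.Vdiff (by linarith : l - c ≤ l)]
  have hmono : ∀ x ∈ Set.Icc (l - c) l,
      (fun _ => phi δ M μ₀ ν₀ κ (l - c)) x ≤ phi δ M μ₀ ν₀ κ x :=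
    fun x hx => H.phi_mono hx.1
  have h := intervalIntegral.integral_mono_on (by linarith : l - c ≤ l)
    intervalIntegrable_const (H.Vint (l - c) l) hmono
  rw [intervalIntegral.integral_const] at h
  have : (l - (l - c)) • phi δ M μ₀ ν₀ κ (l - c) = c * phi δ M μ₀ ν₀ κ (l - c) := by
    rw [smul_eq_mul]; ring
  linarith [h, this.symm.le, this.le]

lemma Efun_ge1 (l : ℝ) : 1 ≤ Efun δ M μ₀ ν₀ κ l := by
  unfold Efun
  have h1 : (1:ℝ) ≤ Real.exp (Vfun δ M μ₀ ν₀ κ l) := Real.one_le_exp (H.Vnonneg l)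
  exact Real.one_le_exp (by linarith)

lemma Efun_one {l : ℝ} (hl : l ≤ sigma0 δ ν₀ κ) : Efun δ M μ₀ ν₀ κ l = 1 := by
  unfold Efun
  rw [H.Vzero hl]
  simp

lemma Efun_mono : Monotone (Efun δ M μ₀ ν₀ κ) := by
  intro a b hab
  unfold Efun
  exact Real.exp_le_exp.2 (by linarith [Real.exp_le_exp.2 (H.Vmono hab)])

lemma Efun_cont : Continuous (Efun δ M μ₀ ν₀ κ) := by
  unfold Efun
  exact Real.continuous_exp.comp ((Real.continuous_exp.comp H.Vcont).sub continuous_const)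

lemma Qfun_zero : Qfun δ M μ₀ ν₀ κ 0 = 0 := by
  unfold Qfun
  rw [H.hν₀.2, H.Efun_one H.sigma0_pos.le]
  ring

lemma Qfun_ge_nu (l : ℝ) : ν₀ l ≤ Qfun δ M μ₀ ν₀ κ l := by
  unfold Qfun
  have := H.Efun_ge1 l
  linarith

lemma Qfun_nonneg {l : ℝ} (hl : 0 ≤ l) : 0 ≤ Qfun δ M μ₀ ν₀ κ l :=
  le_trans (H.nupos hl) (H.Qfun_ge_nu l)

lemma Qfun_ge_E (l : ℝ) (hl : 0 ≤ l) : Efun δ M μ₀ ν₀ κ l - 1 ≤ Qfun δ M μ₀ ν₀ κ l := by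
  unfold Qfun
  have := H.nupos hl
  linarith

lemma Qfun_mono : MonotoneOn (Qfun δ M μ₀ ν₀ κ) (Set.Ici 0) := by
  intro a ha b hb hab
  unfold Qfun
  have h1 := H.hν₀.1.2.1 ha hb hab
  have h2 := H.Efun_mono hab
  linarith

lemma Qfun_cont : ContinuousOn (Qfun δ M μ₀ ν₀ κ) (Set.Ici 0) := by
  unfold Qfun
  exact H.hν₀.1.1.add (H.Efun_cont.continuousOn.sub continuousOn_const)

lemma Qfun_le {m l : ℝ} (hm : 0 ≤ m) (hml : m ≤ l) :
    Qfun δ M μ₀ ν₀ κ m ≤ (1 + ν₀ l) * Efun δ M μ₀ ν₀ κ m := by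
  unfold Qfun
  have h1 : ν₀ m ≤ ν₀ l := H.hν₀.1.2.1 (Set.mem_Ici.2 hm) (Set.mem_Ici.2 (le_trans hm hml)) hml
  have h2 := H.Efun_ge1 m
  have h3 := H.nupos (le_trans hm hml)
  nlinarith

lemma nu1_eq {l : ℝ} (hl : 0 ≤ l) : κ l * nu1 δ M μ₀ ν₀ κ l = Qfun δ M μ₀ ν₀ κ l := by
  unfold nu1
  field_simp [(H.kpos hl).ne']

lemma nu1_nonneg {l : ℝ} (hl : 0 ≤ l) : 0 ≤ nu1 δ M μ₀ ν₀ κ l :=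
  div_nonneg (H.Qfun_nonneg hl) (H.kpos hl).le

lemma nu1_mono : MonotoneOn (nu1 δ M μ₀ ν₀ κ) (Set.Ici 0) := by
  intro a ha b hb hab
  unfold nu1
  exact div_le_div₀ (H.Qfun_nonneg hb) (H.Qfun_mono ha hb hab) (H.kpos hb) (H.hκm ha hb hab)

lemma nu1_cont : ContinuousOn (nu1 δ M μ₀ ν₀ κ) (Set.Ici 0) :=
  H.Qfun_cont.div H.hκc (fun t ht => (H.kpos ht).ne')

lemma nu1_zero : nu1 δ M μ₀ ν₀ κ 0 = 0 := by
  unfold nu1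
  rw [H.Qfun_zero, zero_div]

lemma nu1_cndc0 : CNdc0 (nu1 δ M μ₀ ν₀ κ) :=
  ⟨⟨H.nu1_cont, H.nu1_mono, fun t ht => H.nu1_nonneg ht⟩, H.nu1_zero⟩

lemma nu1_small {l : ℝ} (hl0 : 0 ≤ l) (hl : l ≤ sigma0 δ ν₀ κ) :
    nu1 δ M μ₀ ν₀ κ l = ν₀ l / κ l := by
  unfold nu1 Qfun
  rw [H.Efun_one hl]
  ring_nf

lemma Qgrow {m l c : ℝ} (hm : 0 ≤ m) (hml : m ≤ l) (hc : 1 ≤ c)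
    (hcl : c ≤ innerC δ M μ₀ ν₀ κ l)
    (hD : Dfun δ M μ₀ ν₀ κ l ≤ Vfun δ M μ₀ ν₀ κ l - Vfun δ M μ₀ ν₀ κ m) :
    c * (Efun δ M μ₀ ν₀ κ m)^2 ≤ Qfun δ M μ₀ ν₀ κ l := by
  have hl0 : 0 ≤ l := le_trans hm hml
  have hx : 1 ≤ Real.exp (Vfun δ M μ₀ ν₀ κ m) := by
    rw [show (1:ℝ) = Real.exp 0 by simp]
    exact Real.exp_le_exp.2 (H.Vnonneg m)
  have hDl := H.Dfun_ge_log hl0 hcl (by linarith)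
  have hVl : 2 + Real.log (1 + c) + Vfun δ M μ₀ ν₀ κ m ≤ Vfun δ M μ₀ ν₀ κ l := by
    linarith
  have hxy : Real.exp (2 + Real.log (1 + c)) * Real.exp (Vfun δ M μ₀ ν₀ κ m)
      ≤ Real.exp (Vfun δ M μ₀ ν₀ κ l) := by
    rw [← Real.exp_add]
    exact Real.exp_le_exp.2 hVl
  have h := growthAux hx hc hxy
  have h2 := H.Qfun_ge_E l hl0
  unfold Efun at h2 ⊢
  linarith

end Hyp

/-- Construction of accelerated weights (μ₁, ν₁) making the weighted spaces a
convolution algebra with an arbitrarily small gain factor κ. -/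
theorem stmt7 (δ : ℝ) (hδ : δ ∈ Set.Ioc (0:ℝ) 1)
    (M : ℕ → ℝ) (hMmono : Monotone M) (hMone : ∀ n : ℕ, 1 ≤ M n)
    (μ₀ : ℝ → ℝ) (hμ₀ : CNdcDelta δ μ₀)
    (ν₀ : ℝ → ℝ) (hν₀ : CNdc0 ν₀)
    (κ : ℝ → ℝ) (hκcont : ContinuousOn κ (Set.Ici 0))
    (hκmono : AntitoneOn κ (Set.Ici 0))
    (hκrange : ∀ t : ℝ, 0 ≤ t → κ t ∈ Set.Ioc (0:ℝ) 1) :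
    ∃ μ₁ ν₁ : ℝ → ℝ,
      CNdcDelta δ μ₁ ∧ CNdc0 ν₁ ∧
      -- (i)
      (∀ l : ℝ, 0 ≤ l → μ₀ l ≤ μ₁ l) ∧
      (∀ l : ℝ, 4*δ ≤ l → 2 * μ₁ (l - δ) ≤ μ₁ l) ∧
      -- (ii)
      (∀ l : ℝ, 0 ≤ l → ν₀ l ≤ κ l * ν₁ l) ∧
      CNdc0 (fun l => κ l * ν₁ l) ∧
      -- (iii)
      (∀ l : ℝ, 0 < l → ∃ ε : ℝ, 0 < ε ∧ ε ≤ δ/2 ∧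
        9 * ν₁ (2*ε) * ν₁ l ≤ κ l * ν₁ l ∧
        (2*ε < l → 9 * (ν₁ (l - ε))^2 ≤ κ l * ν₁ l)) ∧
      -- (iv)
      (∀ l : ℝ, 4*δ < l →
        3 * (M ⌊μ₁ (l - δ)⌋₊ * ν₁ (l - δ))^2 ≤ κ l * ν₁ l) := by
  have H : Hyp δ M μ₀ ν₀ κ := ⟨hδ.1, hδ.2, hMmono, hMone, hμ₀, hν₀, hκcont, hκmono, hκrange⟩
  have hδ0 := hδ.1
  refine ⟨mu1 δ μ₀, nu1 δ M μ₀ ν₀ κ, mu1_cndc δ hδ0 μ₀ hμ₀, H.nu1_cndc0,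
    mu1_ge δ μ₀ hμ₀, mu1_double δ hδ0 μ₀ hμ₀, ?_, ?_, ?_, ?_⟩
  · intro l hl
    rw [H.nu1_eq hl]
    exact H.Qfun_ge_nu l
  · refine ⟨⟨?_, ?_, ?_⟩, ?_⟩
    · exact H.Qfun_cont.congr (fun l hl => H.nu1_eq hl)
    · intro a ha b hb hab
      show κ a * nu1 δ M μ₀ ν₀ κ a ≤ κ b * nu1 δ M μ₀ ν₀ κ b
      rw [H.nu1_eq ha, H.nu1_eq hb]
      exact H.Qfun_mono ha hb hab
    · intro t ht
      show 0 ≤ κ t * nu1 δ M μ₀ ν₀ κ t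
      rw [H.nu1_eq ht]
      exact H.Qfun_nonneg ht
    · show κ 0 * nu1 δ M μ₀ ν₀ κ 0 = 0
      rw [H.nu1_zero]; ring
  · -- (iii)
    intro l hl
    have hκl := H.kpos hl.le
    set m0 := min δ l with hm0def
    have hm0 : 0 < m0 := lt_min hδ0 hl
    set tstar := sSup {t | t ∈ Set.Icc 0 m0 ∧ nu1 δ M μ₀ ν₀ κ t ≤ κ l / 9} with htsdef
    have hcont : ContinuousOn (nu1 δ M μ₀ ν₀ κ) (Set.Icc 0 m0) :=
      H.nu1_cont.mono (fun t ht => ht.1)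
    have hmem := supAux_mem (b := m0) (f := nu1 δ M μ₀ ν₀ κ) (h := fun _ => κ l / 9)
      hm0 hcont continuousOn_const
      (by show nu1 δ M μ₀ ν₀ κ 0 ≤ κ l / 9; rw [H.nu1_zero]; positivity)
    have hpos := supAux_pos (b := m0) (f := nu1 δ M μ₀ ν₀ κ) (h := fun _ => κ l / 9)
      hm0 hcont continuousOn_const
      (by show nu1 δ M μ₀ ν₀ κ 0 < κ l / 9; rw [H.nu1_zero]; positivity)
    rw [← htsdef] at hmem hpos
    obtain ⟨⟨hts0, htsm0⟩, htsν⟩ := hmem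
    refine ⟨tstar / 2, by positivity, ?_, ?_, ?_⟩
    · have := min_le_left δ l; linarith
    · have h2e : 2 * (tstar / 2) = tstar := by ring
      rw [h2e]
      have hν₁l := H.nu1_nonneg hl.le
      nlinarith
    · intro hlt
      have hεpos : 0 < tstar / 2 := by positivity
      have hts_lt : tstar < l := by linarith
      have hlε0 : 0 ≤ l - tstar / 2 := by linarith
      by_cases hcase : nu1 δ M μ₀ ν₀ κ (l - tstar/2) ≤ κ l / 9
      · have hmono : nu1 δ M μ₀ ν₀ κ (l - tstar/2) ≤ nu1 δ M μ₀ ν₀ κ l :=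
          H.nu1_mono (Set.mem_Ici.2 hlε0) (Set.mem_Ici.2 hl.le) (by linarith)
        have hnn := H.nu1_nonneg hlε0
        nlinarith
      · push_neg at hcase
        have hσ2 : (0:ℝ) ≤ sigma0 δ ν₀ κ + δ/2 := by
          have := H.sigma0_pos; linarith
        have hσle : sigma0 δ ν₀ κ ≤ l - tstar/2 := by
          by_contra hσ
          push_neg at hσ
          have hsm := H.nu1_small hlε0 hσ.le
          have h1 : ν₀ (l - tstar/2) / κ (l - tstar/2) ≤ ν₀ (sigma0 δ ν₀ κ) / κ (sigma0 δ ν₀ κ) :=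
            H.nuHat_mono (Set.mem_Ici.2 hlε0) (Set.mem_Ici.2 H.sigma0_pos.le) hσ.le
          have h2 := H.sigma0_spec.2
          have h3 : κ (sigma0 δ ν₀ κ + δ/2) ≤ κ l := by
            apply H.hκm (Set.mem_Ici.2 hl.le) (Set.mem_Ici.2 hσ2)
            have : tstar ≤ δ := le_trans htsm0 (min_le_left δ l)
            linarith
          rw [hsm] at hcase
          linarith
        have hσl : sigma0 δ ν₀ κ ≤ l := by linarith
        have hth : tHat δ ν₀ κ l ≤ tstar := by
          apply le_csSup ⟨m0, fun x hx => hx.1.2⟩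
          have hspec := H.tHat_spec hl.le
          refine ⟨⟨hspec.1.1, le_trans hspec.1.2 (le_min H.sigma0_le hσl)⟩, ?_⟩
          rw [H.nu1_small hspec.1.1 hspec.1.2]
          exact hspec.2
        have hεδ : tstar / 2 ≤ δ := by
          have := le_trans htsm0 (min_le_left δ l); linarith
        have harg0 : (0:ℝ) ≤ l - tstar/2 + δ := by linarith
        have hV : Dfun δ M μ₀ ν₀ κ l ≤
            Vfun δ M μ₀ ν₀ κ l - Vfun δ M μ₀ ν₀ κ (l - tstar/2) := by
          have hinc := H.Vinc (c := tstar/2) hεpos hσle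
          have hphi := H.phi_eq (s := l - tstar/2) hσle
          have hDm : Dfun δ M μ₀ ν₀ κ l ≤ Dfun δ M μ₀ ν₀ κ (l - tstar/2 + δ) :=
            H.Dfun_mono (Set.mem_Ici.2 hl.le) (Set.mem_Ici.2 harg0) (by linarith)
          have hta : tHat δ ν₀ κ (l - tstar/2 + δ) ≤ tHat δ ν₀ κ l :=
            H.tHat_anti hl.le (by linarith)
          have htpos : 0 < tHat δ ν₀ κ (l - tstar/2 + δ) := H.tHat_pos harg0
          have hD2 := H.Dfun_ge2 harg0
          have hDl2 := H.Dfun_ge2 hl.le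
          have h1 : 2 * Dfun δ M μ₀ ν₀ κ l / tstar ≤ phi δ M μ₀ ν₀ κ (l - tstar/2) := by
            rw [hphi]
            apply div_le_div₀ (by linarith) (by linarith) htpos (le_trans hta hth)
          have h2 : tstar/2 * (2 * Dfun δ M μ₀ ν₀ κ l / tstar) = Dfun δ M μ₀ ν₀ κ l := by
            field_simp
          have h3 : tstar/2 * (2 * Dfun δ M μ₀ ν₀ κ l / tstar)
              ≤ tstar/2 * phi δ M μ₀ ν₀ κ (l - tstar/2) :=
            mul_le_mul_of_nonneg_left h1 (by linarith)
          linarith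
        have hr1 : (1:ℝ) ≤ (1 + ν₀ l)/κ l := by
          rw [le_div_iff₀ hκl]
          have := H.kle1 hl.le; have := H.nupos hl.le; linarith
        have hc9 : (1:ℝ) ≤ 9 * ((1 + ν₀ l)/κ l)^2 := by nlinarith
        have hcinner : 9 * ((1 + ν₀ l)/κ l)^2 ≤ innerC δ M μ₀ ν₀ κ l := by
          unfold innerC
          have hM1 : (1:ℝ) ≤ M ⌊mu1 δ μ₀ l⌋₊ := H.hM1 _
          nlinarith [sq_nonneg ((1 + ν₀ l)/κ l)]
        have hg := H.Qgrow (m := l - tstar/2) hlε0 (by linarith) hc9 hcinner hV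
        rw [H.nu1_eq hl.le]
        have hκε : κ l ≤ κ (l - tstar/2) :=
          H.hκm (Set.mem_Ici.2 hlε0) (Set.mem_Ici.2 hl.le) (by linarith)
        have hQm : Qfun δ M μ₀ ν₀ κ (l - tstar/2)
            ≤ (1 + ν₀ l) * Efun δ M μ₀ ν₀ κ (l - tstar/2) := H.Qfun_le hlε0 (by linarith)
        have hE1 := H.Efun_ge1 (l - tstar/2)
        have hQnn := H.Qfun_nonneg hlε0
        have hdiv : Qfun δ M μ₀ ν₀ κ (l - tstar/2) / κ (l - tstar/2)
            ≤ (1 + ν₀ l) * Efun δ M μ₀ ν₀ κ (l - tstar/2) / κ l :=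
          div_le_div₀ (mul_nonneg (by linarith [H.nupos hl.le]) (by linarith)) hQm hκl hκε
        have hlhs0 : 0 ≤ Qfun δ M μ₀ ν₀ κ (l - tstar/2) / κ (l - tstar/2) := by
          have := H.kpos hlε0; positivity
        have hsq := pow_le_pow_left₀ hlhs0 hdiv 2
        have hring : ((1 + ν₀ l) * Efun δ M μ₀ ν₀ κ (l - tstar/2) / κ l)^2
            = ((1 + ν₀ l)/κ l)^2 * (Efun δ M μ₀ ν₀ κ (l - tstar/2))^2 := by ring
        show 9 * (nu1 δ M μ₀ ν₀ κ (l - tstar/2))^2 ≤ Qfun δ M μ₀ ν₀ κ l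
        unfold nu1
        rw [hring] at hsq
        have h9 := mul_le_mul_of_nonneg_left hsq (by norm_num : (0:ℝ) ≤ 9)
        calc 9 * (Qfun δ M μ₀ ν₀ κ (l - tstar/2) / κ (l - tstar/2))^2
            ≤ 9 * (((1 + ν₀ l)/κ l)^2 * (Efun δ M μ₀ ν₀ κ (l - tstar/2))^2) := h9
        _ = 9 * ((1 + ν₀ l)/κ l)^2 * (Efun δ M μ₀ ν₀ κ (l - tstar/2))^2 := by ring
        _ ≤ Qfun δ M μ₀ ν₀ κ l := hg
  · -- (iv)
    intro l hl4
    have hl0 : (0:ℝ) ≤ l := by linarith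
    have hlδ0 : (0:ℝ) ≤ l - δ := by linarith
    have hκl := H.kpos hl0
    have hσle : sigma0 δ ν₀ κ ≤ l - δ := by
      have := H.sigma0_le; linarith
    rw [H.nu1_eq hl0]
    have hV : Dfun δ M μ₀ ν₀ κ l ≤ Vfun δ M μ₀ ν₀ κ l - Vfun δ M μ₀ ν₀ κ (l - δ) := by
      have hinc := H.Vinc (c := δ) hδ0 hσle
      have hphi := H.phi_eq (s := l - δ) hσle
      have harg : l - δ + δ = l := by ring
      rw [harg] at hphi
      have htpos := H.tHat_pos hl0
      have htσ : tHat δ ν₀ κ l ≤ δ := le_trans (H.tHat_spec hl0).1.2 H.sigma0_le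
      have hD2 := H.Dfun_ge2 hl0
      have h1 : tHat δ ν₀ κ l * (2 * Dfun δ M μ₀ ν₀ κ l / tHat δ ν₀ κ l)
          = 2 * Dfun δ M μ₀ ν₀ κ l := by field_simp
      have h2 : tHat δ ν₀ κ l * (2 * Dfun δ M μ₀ ν₀ κ l / tHat δ ν₀ κ l)
          ≤ δ * (2 * Dfun δ M μ₀ ν₀ κ l / tHat δ ν₀ κ l) := by
        apply mul_le_mul_of_nonneg_right htσ
        positivity
      rw [hphi] at hinc
      linarith
    have hM1 : (1:ℝ) ≤ M ⌊mu1 δ μ₀ (l - δ)⌋₊ := H.hM1 _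
    have hκδ := H.kpos hlδ0
    have hr1 : (1:ℝ) ≤ (1 + ν₀ (l - δ))/κ (l - δ) := by
      rw [le_div_iff₀ hκδ]
      have := H.kle1 hlδ0; have := H.nupos hlδ0; linarith
    have hM2 : (1:ℝ) ≤ (M ⌊mu1 δ μ₀ (l - δ)⌋₊)^2 := by nlinarith
    have hr2 : (1:ℝ) ≤ ((1 + ν₀ (l - δ))/κ (l - δ))^2 := by nlinarith
    have hc : (1:ℝ) ≤ 3 * (M ⌊mu1 δ μ₀ (l - δ)⌋₊)^2 * ((1 + ν₀ (l - δ))/κ (l - δ))^2 := by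
      nlinarith [mul_le_mul hM2 hr2 (by norm_num : (0:ℝ) ≤ 1) (by positivity)]
    have hcl : 3 * (M ⌊mu1 δ μ₀ (l - δ)⌋₊)^2 * ((1 + ν₀ (l - δ))/κ (l - δ))^2
        ≤ innerC δ M μ₀ ν₀ κ l := by
      unfold innerC
      have hmu : MonotoneOn (mu1 δ μ₀) (Set.Ici 0) := (mu1_cndc δ hδ0 μ₀ hμ₀).1.2.1
      have hMab : M ⌊mu1 δ μ₀ (l - δ)⌋₊ ≤ M ⌊mu1 δ μ₀ l⌋₊ :=
        H.hM (Nat.floor_mono (hmu (Set.mem_Ici.2 hlδ0) (Set.mem_Ici.2 hl0) (by linarith)))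
      have hrab : (1 + ν₀ (l - δ))/κ (l - δ) ≤ (1 + ν₀ l)/κ l := by
        apply div_le_div₀ _ _ hκl (H.hκm (Set.mem_Ici.2 hlδ0) (Set.mem_Ici.2 hl0) (by linarith))
        · have := H.nupos hl0; linarith
        · have := H.hν₀.1.2.1 (Set.mem_Ici.2 hlδ0) (Set.mem_Ici.2 hl0) (by linarith); linarith
      have hMsq : (M ⌊mu1 δ μ₀ (l - δ)⌋₊)^2 ≤ (M ⌊mu1 δ μ₀ l⌋₊)^2 :=
        pow_le_pow_left₀ (by linarith) hMab 2
      have h1 : 3 * (M ⌊mu1 δ μ₀ (l - δ)⌋₊)^2 ≤ 9 + 3 * (M ⌊mu1 δ μ₀ l⌋₊)^2 := by linarith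
      have h2 : ((1 + ν₀ (l - δ))/κ (l - δ))^2 ≤ ((1 + ν₀ l)/κ l)^2 :=
        pow_le_pow_left₀ (le_trans zero_le_one hr1) hrab 2
      exact mul_le_mul h1 h2 (by positivity) (by positivity)
    have hg := H.Qgrow (m := l - δ) hlδ0 (by linarith) hc hcl hV
    have hQm : Qfun δ M μ₀ ν₀ κ (l - δ) ≤ (1 + ν₀ (l - δ)) * Efun δ M μ₀ ν₀ κ (l - δ) :=
      H.Qfun_le hlδ0 (le_refl _)
    have hE1 := H.Efun_ge1 (l - δ)
    have hQnn := H.Qfun_nonneg hlδ0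
    have hdiv : Qfun δ M μ₀ ν₀ κ (l - δ) / κ (l - δ)
        ≤ (1 + ν₀ (l - δ)) * Efun δ M μ₀ ν₀ κ (l - δ) / κ (l - δ) :=
      div_le_div₀ (mul_nonneg (by linarith [H.nupos hlδ0]) (by linarith)) hQm hκδ (le_refl _)
    have hlhs0 : 0 ≤ Qfun δ M μ₀ ν₀ κ (l - δ) / κ (l - δ) := by positivity
    have hsq := pow_le_pow_left₀ hlhs0 hdiv 2
    have hring : ((1 + ν₀ (l - δ)) * Efun δ M μ₀ ν₀ κ (l - δ) / κ (l - δ))^2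
        = ((1 + ν₀ (l - δ))/κ (l - δ))^2 * (Efun δ M μ₀ ν₀ κ (l - δ))^2 := by ring
    show 3 * (M ⌊mu1 δ μ₀ (l - δ)⌋₊ * nu1 δ M μ₀ ν₀ κ (l - δ))^2 ≤ Qfun δ M μ₀ ν₀ κ l
    unfold nu1
    rw [hring] at hsq
    have hMnn : (0:ℝ) ≤ 3 * (M ⌊mu1 δ μ₀ (l - δ)⌋₊)^2 := by positivity
    have h3 := mul_le_mul_of_nonneg_left hsq hMnn
    calc 3 * (M ⌊mu1 δ μ₀ (l - δ)⌋₊ * (Qfun δ M μ₀ ν₀ κ (l - δ) / κ (l - δ)))^2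
        = 3 * (M ⌊mu1 δ μ₀ (l - δ)⌋₊)^2 * (Qfun δ M μ₀ ν₀ κ (l - δ) / κ (l - δ))^2 := by ring
    _ ≤ 3 * (M ⌊mu1 δ μ₀ (l - δ)⌋₊)^2
        * (((1 + ν₀ (l - δ))/κ (l - δ))^2 * (Efun δ M μ₀ ν₀ κ (l - δ))^2) := h3
    _ = 3 * (M ⌊mu1 δ μ₀ (l - δ)⌋₊)^2 * ((1 + ν₀ (l - δ))/κ (l - δ))^2
        * (Efun δ M μ₀ ν₀ κ (l - δ))^2 := by ring
    _ ≤ Qfun δ M μ₀ ν₀ κ l := hg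
end

section
/- Fix u₀ ∈ ℂ and define v_n : ℝ → ℂ recursively by v₀(t) := u₀ and v_n(t) := u₀ + ∫₀ᵗ v_{n−1}(s)² ds (the Picard iterates for the ODE u̇ = u², u(0) = u₀). Then there exist real numbers c_{n,k}, defined for integers n ≥ 0 and 0 ≤ k ≤ 2ⁿ − 1 and independent of u₀ and t, such that for every n ≥ 0 and every t ∈ ℝ: v_n(t) = Σ_{k=0}^{2ⁿ−1} c_{n,k}·t^k·u₀^{k+1}, with c_{n,k} = 1 for 0 ≤ k ≤ n and 0 < c_{n,k} < 1 for n < k ≤ 2ⁿ − 1. -/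
noncomputable section

/-- Picard iterates for u̇ = u², u(0) = u₀. -/
def picard (u₀ : ℂ) : ℕ → ℝ → ℂ
  | 0 => fun _ => u₀
  | n+1 => fun t => u₀ + ∫ s in (0:ℝ)..t, (picard u₀ n s)^2


def cc : ℕ → ℕ → ℝ
  | 0, 0 => 1
  | 0, _+1 => 0
  | _+1, 0 => 1
  | n+1, k+1 => (∑ i ∈ Finset.range (k+1), cc n i * cc n (k-i)) / (k+1)

lemma cc_zero_succ (k : ℕ) : cc 0 (k+1) = 0 := rfl
lemma cc_succ_zero (n : ℕ) : cc (n+1) 0 = 1 := rfl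
lemma cc_succ_succ (n k : ℕ) :
    cc (n+1) (k+1) = (∑ i ∈ Finset.range (k+1), cc n i * cc n (k-i)) / (k+1) := rfl

lemma cc_nonneg_le_one (n : ℕ) : ∀ k, 0 ≤ cc n k ∧ cc n k ≤ 1 := by
  induction n with
  | zero =>
    rintro (_ | k)
    · norm_num [cc]
    · norm_num [cc_zero_succ]
  | succ n ih =>
    rintro (_ | k)
    · norm_num [cc_succ_zero]
    · rw [cc_succ_succ]
      have hnn : ∀ i ∈ Finset.range (k+1), 0 ≤ cc n i * cc n (k-i) :=
        fun i _ => mul_nonneg (ih i).1 (ih (k-i)).1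
      constructor
      · exact div_nonneg (Finset.sum_nonneg hnn) (by positivity)
      · rw [div_le_one (by positivity)]
        calc ∑ i ∈ Finset.range (k+1), cc n i * cc n (k-i)
            ≤ ∑ _i ∈ Finset.range (k+1), (1:ℝ) :=
              Finset.sum_le_sum fun i _ =>
                mul_le_one₀ (ih i).2 (ih (k-i)).1 (ih (k-i)).2
          _ = (k+1 : ℝ) := by simp

lemma cc_eq_zero (n : ℕ) : ∀ k, 2^n ≤ k → cc n k = 0 := by
  induction n with
  | zero =>
    rintro (_ | k) h
    · simp at h
    · exact cc_zero_succ k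
  | succ n ih =>
    rintro (_ | k) h
    · exact absurd h (Nat.pow_pos two_pos).not_ge
    · rw [cc_succ_succ]
      have : ∀ i ∈ Finset.range (k+1), cc n i * cc n (k-i) = 0 := by
        intro i hi
        rcases le_or_gt (2^n) i with h2 | h2
        · rw [ih i h2, zero_mul]
        · have : 2^n ≤ k - i := by
            simp [Finset.mem_range] at hi
            have : 2^(n+1) = 2^n + 2^n := by ring
            omega
          rw [ih _ this, mul_zero]
      rw [Finset.sum_eq_zero this, zero_div]

lemma cc_eq_one (n : ℕ) : ∀ k, k ≤ n → cc n k = 1 := by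
  induction n with
  | zero => rintro (_ | k) h
            · norm_num [cc]
            · omega
  | succ n ih =>
    rintro (_ | k) h
    · exact cc_succ_zero n
    · rw [cc_succ_succ]
      have : ∀ i ∈ Finset.range (k+1), cc n i * cc n (k-i) = 1 := by
        intro i hi
        simp only [Finset.mem_range] at hi
        rw [ih i (by omega), ih (k-i) (by omega), mul_one]
      rw [Finset.sum_eq_card_nsmul this]
      simp
      exact Nat.cast_add_one_ne_zero k

lemma cc_pos (n : ℕ) : ∀ k, k < 2^n → 0 < cc n k := by
  induction n with
  | zero =>
    intro k h
    interval_cases k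
    norm_num [cc]
  | succ n ih =>
    rintro (_ | k) h
    · norm_num [cc_succ_zero]
    · rw [cc_succ_succ]
      apply div_pos _ (by positivity)
      have h2 : 2^(n+1) = 2^n + 2^n := by ring
      set i₀ := min k (2^n - 1) with hi₀
      have hpow : 0 < 2^n := Nat.pow_pos two_pos
      apply Finset.sum_pos' (fun i _ => mul_nonneg (cc_nonneg_le_one n i).1 (cc_nonneg_le_one n _).1)
      refine ⟨i₀, Finset.mem_range.mpr (by omega), ?_⟩
      exact mul_pos (ih i₀ (by omega)) (ih (k - i₀) (by omega))

lemma cc_lt_one (n : ℕ) : ∀ k, n < k → cc n k < 1 := by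
  induction n with
  | zero =>
    rintro (_ | k) h
    · omega
    · norm_num [cc_zero_succ]
  | succ n ih =>
    rintro (_ | k) h
    · omega
    · rw [cc_succ_succ, div_lt_one (by positivity)]
      calc ∑ i ∈ Finset.range (k+1), cc n i * cc n (k-i)
          < ∑ _i ∈ Finset.range (k+1), (1:ℝ) := by
            apply Finset.sum_lt_sum
            · exact fun i _ => mul_le_one₀ (cc_nonneg_le_one n i).2
                (cc_nonneg_le_one n _).1 (cc_nonneg_le_one n _).2
            · refine ⟨0, Finset.mem_range.mpr (by omega), ?_⟩
              rw [cc_eq_one n 0 (by omega), one_mul, Nat.sub_zero]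
              exact ih k (by omega)
        _ = (k+1 : ℝ) := by simp

open Polynomial in
lemma cauchy (M : ℕ) (hM : 0 < M) (a : ℕ → ℂ) (ha : ∀ i, M ≤ i → a i = 0) (s : ℂ) :
    (∑ k ∈ Finset.range M, a k * s^k)^2
      = ∑ m ∈ Finset.range (2*M), (∑ i ∈ Finset.range (m+1), a i * a (m-i)) * s^m := by
  set p : ℂ[X] := ∑ k ∈ Finset.range M, C (a k) * X^k with hp
  have hcoeff : ∀ j, p.coeff j = a j := by
    intro j
    rw [hp, finset_sum_coeff]
    simp only [coeff_C_mul, coeff_X_pow, mul_ite, mul_one, mul_zero]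
    rw [Finset.sum_ite_eq (Finset.range M) j a]
    split
    · rfl
    · next h => exact (ha j (by simpa using h)).symm
  have heval : p.eval s = ∑ k ∈ Finset.range M, a k * s^k := by
    rw [hp, eval_finset_sum]
    simp
  have hdeg : (p^2).natDegree < 2 * M := by
    have h1 : p.natDegree ≤ M - 1 :=
      natDegree_sum_le_of_forall_le _ _ fun k hk =>
        (natDegree_C_mul_X_pow_le (a k) k).trans (by simp at hk; omega)
    calc (p^2).natDegree ≤ 2 * p.natDegree := natDegree_pow_le
      _ ≤ 2 * (M-1) := by omega
      _ < 2 * M := by omega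
  calc (∑ k ∈ Finset.range M, a k * s^k)^2 = (p^2).eval s := by rw [eval_pow, heval]
    _ = ∑ m ∈ Finset.range (2*M), (p^2).coeff m * s^m := eval_eq_sum_range' hdeg s
    _ = _ := by
        refine Finset.sum_congr rfl fun m _ => ?_
        rw [sq, coeff_mul, Finset.Nat.sum_antidiagonal_eq_sum_range_succ_mk]
        simp only [hcoeff]

lemma integral_pow_complex (t : ℝ) (m : ℕ) :
    (∫ s in (0:ℝ)..t, ((s:ℂ))^m) = ((t^(m+1)/(m+1) : ℝ) : ℂ) := by
  have h : (fun s : ℝ => ((s:ℂ))^m) = fun s : ℝ => ((s^m : ℝ) : ℂ) := by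
    funext s; push_cast; ring
  rw [h, intervalIntegral.integral_ofReal, integral_pow]
  norm_num

lemma picard_eq (u₀ : ℂ) : ∀ (n : ℕ) (t : ℝ),
    picard u₀ n t = ∑ k ∈ Finset.range (2^n), (cc n k : ℂ) * (t:ℂ)^k * u₀^(k+1) := by
  intro n
  induction n with
  | zero => intro t; simp [picard, cc]
  | succ n ih =>
    intro t
    set a : ℕ → ℂ := fun k => (cc n k : ℂ) * u₀^(k+1) with ha_def
    have ha : ∀ i, 2^n ≤ i → a i = 0 := by
      intro i hi; simp [ha_def, cc_eq_zero n i hi]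
    have hsq : ∀ s : ℝ, (picard u₀ n s)^2
        = ∑ m ∈ Finset.range (2 * 2^n),
            (∑ i ∈ Finset.range (m+1), a i * a (m-i)) * ((s:ℂ))^m := by
      intro s
      rw [ih s]
      rw [show (∑ k ∈ Finset.range (2^n), (cc n k : ℂ) * (s:ℂ)^k * u₀^(k+1))
          = ∑ k ∈ Finset.range (2^n), a k * ((s:ℂ))^k from
        Finset.sum_congr rfl fun k _ => by simp [ha_def]; ring]
      exact cauchy (2^n) (Nat.pow_pos two_pos) a ha _
    have hint : (∫ s in (0:ℝ)..t, (picard u₀ n s)^2)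
        = ∑ m ∈ Finset.range (2 * 2^n),
            (∑ i ∈ Finset.range (m+1), a i * a (m-i)) * ((t^(m+1)/(m+1) : ℝ) : ℂ) := by
      rw [intervalIntegral.integral_congr (g := fun s => ∑ m ∈ Finset.range (2 * 2^n),
            (∑ i ∈ Finset.range (m+1), a i * a (m-i)) * ((s:ℂ))^m)
          (fun s _ => hsq s)]
      rw [intervalIntegral.integral_finset_sum]
      · refine Finset.sum_congr rfl fun m _ => ?_
        rw [intervalIntegral.integral_const_mul, integral_pow_complex]
      · intro m _
        apply Continuous.intervalIntegrable
        fun_prop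
    have hb : ∀ m ∈ Finset.range (2 * 2^n),
        (∑ i ∈ Finset.range (m+1), a i * a (m-i))
          = ((∑ i ∈ Finset.range (m+1), cc n i * cc n (m-i) : ℝ) : ℂ) * u₀^(m+2) := by
      intro m _
      push_cast
      rw [Finset.sum_mul]
      refine Finset.sum_congr rfl fun i hi => ?_
      simp only [Finset.mem_range] at hi
      simp only [ha_def]
      rw [mul_mul_mul_comm, show u₀^(i+1) * u₀^(m-i+1) = u₀^(m+2) by
        rw [← pow_add]; congr 1; omega]
    show u₀ + _ = _
    rw [hint]
    rw [show (∑ m ∈ Finset.range (2 * 2^n),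
          (∑ i ∈ Finset.range (m+1), a i * a (m-i)) * ((t^(m+1)/(m+1) : ℝ) : ℂ))
        = ∑ m ∈ Finset.range (2 * 2^n),
          ((∑ i ∈ Finset.range (m+1), cc n i * cc n (m-i) : ℝ) : ℂ) * u₀^(m+2)
            * ((t^(m+1)/(m+1) : ℝ) : ℂ) from
      Finset.sum_congr rfl fun m hm => by rw [hb m hm]]
    have h2 : 2 * 2^n = (2^(n+1) - 1) + 1 := by
      have : 0 < 2^n := Nat.pow_pos two_pos
      rw [pow_succ]; omega
    rw [h2, Finset.sum_range_succ]
    have hlast : (∑ i ∈ Finset.range ((2^(n+1)-1)+1), cc n i * cc n ((2^(n+1)-1)-i) : ℝ) = 0 := by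
      apply Finset.sum_eq_zero
      intro i hi
      simp only [Finset.mem_range] at hi
      rcases le_or_gt (2^n) i with h' | h'
      · rw [cc_eq_zero n i h', zero_mul]
      · rw [cc_eq_zero n ((2^(n+1)-1)-i) (by
          have : 2^(n+1) = 2^n + 2^n := by ring
          omega), mul_zero]
    rw [hlast, Complex.ofReal_zero, zero_mul, zero_mul, add_zero]
    conv_rhs => rw [show 2^(n+1) = (2^(n+1)-1)+1 by
      have : 0 < 2^(n+1) := Nat.pow_pos two_pos
      omega]
    rw [Finset.sum_range_succ']
    rw [add_comm]
    congr 1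
    · refine Finset.sum_congr rfl fun m _ => ?_
      rw [cc_succ_succ n m]
      push_cast
      field_simp
    · simp [cc_succ_zero]

/-- Structure of the Picard iterates: v_n(t) = Σ_{k<2ⁿ} c_{n,k} t^k u₀^{k+1} with
c_{n,k} = 1 for k ≤ n and 0 < c_{n,k} < 1 for n < k ≤ 2ⁿ−1, independent of u₀, t. -/
theorem stmt9 :
    ∃ c : ℕ → ℕ → ℝ,
      (∀ n k : ℕ, k ≤ n → c n k = 1) ∧
      (∀ n k : ℕ, n < k → k ≤ 2^n - 1 → 0 < c n k ∧ c n k < 1) ∧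
      ∀ (u₀ : ℂ) (n : ℕ) (t : ℝ),
        picard u₀ n t = ∑ k ∈ Finset.range (2^n), (c n k : ℂ) * (t:ℂ)^k * u₀^(k+1) := by
  refine ⟨cc, fun n k h => cc_eq_one n k h, fun n k h1 h2 => ?_, fun u₀ n t => picard_eq u₀ n t⟩
  have hpow : 0 < 2^n := Nat.pow_pos two_pos
  exact ⟨cc_pos n k (by omega), cc_lt_one n k h1⟩

end
end

section
/- Let d ≥ 1 be an integer, c ∈ ℝ^d with c ≠ 0, and let μ := (δ_c + δ_{−c})/2, where δ_x denotes the Dirac measure at x and μ^{∗m} the m-fold convolution power of μ on ℝ^d. Then: (i) for every integer m ≥ 1, μ^{∗m}({0}) = binom(m, m/2)·2^{−m} if m is even, and μ^{∗m}({0}) = 0 if m is odd; (ii) binom(2k,k)·4^{−k} ≥ 1/(2k) for every integer k ≥ 1; (iii) consequently, for every t ∈ [0,1), Σ_{n=0}^∞ tⁿ·μ^{∗(n+1)}({0}) = Σ_{k=1}^∞ binom(2k,k)·4^{−k}·t^{2k−1} ≥ Σ_{k=1}^∞ t^{2k−1}/(2k), and this quantity tends to +∞ as t → 1⁻. -/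
open MeasureTheory
open scoped ENNReal
noncomputable section

open Finset

section ConvAux
variable {α : Type*} [MeasurableSpace α] [AddCommMonoid α] [MeasurableAdd₂ α]

theorem myProdSmulRight (μ ν : Measure α) [IsFiniteMeasure μ] [IsFiniteMeasure ν]
    (a : ℝ≥0∞) (ha : a ≠ ⊤) : μ.prod (a • ν) = a • μ.prod ν := by
  have : IsFiniteMeasure (a • ν) := ν.smul_finite ha
  refine Measure.prod_eq ?_
  intro s t hs ht
  simp [Measure.prod_prod, mul_left_comm, mul_comm]

theorem myConvSmulRight (μ ν : Measure α) [IsFiniteMeasure μ] [IsFiniteMeasure ν]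
    (a : ℝ≥0∞) (ha : a ≠ ⊤) : μ.conv (a • ν) = a • μ.conv ν := by
  unfold Measure.conv
  rw [myProdSmulRight μ ν a ha, Measure.map_smul]

theorem myConvDirac (μ : Measure α) [SFinite μ] (y : α) :
    μ.conv (Measure.dirac y) = μ.map (· + y) := by
  unfold Measure.conv
  rw [Measure.prod_dirac, Measure.map_map (by fun_prop) (by fun_prop)]
  rfl

theorem myMapFinsetSum {ι : Type*} (s : Finset ι) (f : ι → Measure α) {g : α → α}
    (hg : Measurable g) : (∑ i ∈ s, f i).map g = ∑ i ∈ s, (f i).map g := by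
  induction s using Finset.cons_induction with
  | empty => simp
  | cons a s ha ih => simp [Finset.sum_cons, Measure.map_add _ _ hg, ih]

theorem myConvMu (c : α) (ρ : Measure α) [IsFiniteMeasure ρ] (c' : α) :
    ρ.conv (((1:ℝ≥0∞)/2) • (Measure.dirac c + Measure.dirac c')) =
      ((1:ℝ≥0∞)/2) • (ρ.map (· + c) + ρ.map (· + c')) := by
  rw [myConvSmulRight _ _ _ (by norm_num), Measure.conv_add, myConvDirac, myConvDirac]

theorem myPascalSum (D : ℕ → Measure α) (m : ℕ) :
    (∑ j ∈ range (m+1), (Nat.choose m j : ℝ≥0∞) • D (j+1))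
      + (∑ j ∈ range (m+1), (Nat.choose m j : ℝ≥0∞) • D j)
    = ∑ i ∈ range (m+2), (Nat.choose (m+1) i : ℝ≥0∞) • D i := by
  rw [Finset.sum_range_succ' (fun i => (Nat.choose (m+1) i : ℝ≥0∞) • D i) (m+1),
      Finset.sum_range_succ' (fun j => (Nat.choose m j : ℝ≥0∞) • D j) m]
  simp only [Nat.choose_succ_succ, Nat.cast_add, add_smul, Finset.sum_add_distrib,
    Nat.choose_zero_right, Nat.cast_one, one_smul]
  rw [Finset.sum_range_succ (fun i => (Nat.choose m (i+1) : ℝ≥0∞) • D (i+1)) m]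
  simp only [Nat.choose_succ_self, Nat.cast_zero, zero_smul, add_zero]
  abel

end ConvAux

/-- m-fold convolution power of a measure: μ^{∗1} = μ, μ^{∗(m+1)} = μ^{∗m} ∗ μ. -/
def measConvPow {d : ℕ} (μ : Measure (EuclideanSpace ℝ (Fin d))) : ℕ → Measure (EuclideanSpace ℝ (Fin d))
  | 0 => μ
  | 1 => μ
  | m+2 => Measure.conv (measConvPow μ (m+1)) μ

section BinSum
variable {d : ℕ}

def binSum (c : EuclideanSpace ℝ (Fin d)) (m : ℕ) : Measure (EuclideanSpace ℝ (Fin d)) :=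
  ∑ j ∈ range (m+1), (Nat.choose m j : ℝ≥0∞) • Measure.dirac ((2*(j:ℤ) - m) • c)

instance binSum_finite (c : EuclideanSpace ℝ (Fin d)) (m : ℕ) : IsFiniteMeasure (binSum c m) := by
  constructor
  rw [binSum, Measure.finset_sum_apply]
  refine ENNReal.sum_lt_top.2 fun j _ => ?_
  simp [Measure.smul_apply]

theorem convPow_eq (c : EuclideanSpace ℝ (Fin d)) (μ : Measure (EuclideanSpace ℝ (Fin d)))
    (hμ : μ = ((1:ℝ≥0∞)/2) • (Measure.dirac c + Measure.dirac (-c))) :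
    ∀ m : ℕ, 1 ≤ m → measConvPow μ m = ((1:ℝ≥0∞)/2)^m • binSum c m := by
  have hzsmul : ∀ (n : ℤ), n • c + c = (n+1) • c := fun n => by rw [add_zsmul, one_zsmul]
  have hzsmul' : ∀ (n : ℤ), n • c + (-c) = (n-1) • c := fun n => by
    simp [sub_zsmul]
  intro m hm
  induction m with
  | zero => omega
  | succ k ih =>
    rcases Nat.eq_or_lt_of_le hm with h1 | h2
    · -- k + 1 = 1
      have hk : k = 0 := by omega
      subst hk
      show μ = _
      rw [hμ, binSum]
      rw [Finset.sum_range_succ, Finset.sum_range_succ, Finset.sum_range_zero]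
      norm_num
      exact add_comm _ _
    · have hk : 1 ≤ k := by omega
      have ihk := ih hk
      haveI hfin : IsFiniteMeasure (((1:ℝ≥0∞)/2)^k • binSum c k) :=
        (binSum c k).smul_finite (by
          refine ENNReal.pow_ne_top ?_
          norm_num)
      obtain ⟨k', rfl⟩ : ∃ k', k = k' + 1 := ⟨k - 1, by omega⟩
      have hstep : measConvPow μ (k' + 2) = (measConvPow μ (k' + 1)).conv μ := rfl
      set D : ℕ → Measure (EuclideanSpace ℝ (Fin d)) :=
        fun i => Measure.dirac ((2*(i:ℤ) - ((k':ℤ)+2)) • c) with hD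
      rw [hstep, ihk, hμ, myConvMu, Measure.map_smul, Measure.map_smul, ← smul_add,
        smul_smul, binSum, myMapFinsetSum _ _ (by fun_prop), myMapFinsetSum _ _ (by fun_prop)]
      push_cast
      have hmap1 : ∀ j ∈ range (k'+2),
          Measure.map (· + c) (((Nat.choose (k'+1) j : ℝ≥0∞)) • Measure.dirac ((2*(j:ℤ) - ((k':ℤ)+1)) • c))
          = (Nat.choose (k'+1) j : ℝ≥0∞) • D (j+1) := by
        intro j _
        rw [Measure.map_smul, Measure.map_dirac' (by fun_prop), hzsmul, hD]
        congr 2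
        push_cast
        ring
      have hmap2 : ∀ j ∈ range (k'+2),
          Measure.map (· + (-c)) (((Nat.choose (k'+1) j : ℝ≥0∞)) • Measure.dirac ((2*(j:ℤ) - ((k':ℤ)+1)) • c))
          = (Nat.choose (k'+1) j : ℝ≥0∞) • D j := by
        intro j _
        rw [Measure.map_smul, Measure.map_dirac' (by fun_prop), hzsmul', hD]
        congr 2
        push_cast
        ring
      rw [Finset.sum_congr rfl hmap1, Finset.sum_congr rfl hmap2, myPascalSum D (k'+1), binSum]
      have hsum : ∀ i ∈ range (k'+3), (Nat.choose (k'+2) i : ℝ≥0∞) • D i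
          = (Nat.choose (k'+2) i : ℝ≥0∞) • Measure.dirac ((2*(i:ℤ) - ((k':ℤ)+2)) • c) := by
        intro i _; rfl
      rw [show (1/2:ℝ≥0∞) * (1/2)^(k'+1) = (1/2)^(k'+1+1) from by ring]
      congr 1

theorem binSum_apply_zero (c : EuclideanSpace ℝ (Fin d)) (hc : c ≠ 0) (m : ℕ) :
    binSum c m {0} = if Even m then (Nat.choose m (m/2) : ℝ≥0∞) else 0 := by
  rw [binSum, Measure.finset_sum_apply]
  have key : ∀ j : ℕ, ((2*(j:ℤ) - m) • c = 0) ↔ 2*j = m := by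
    intro j
    rw [← Int.cast_smul_eq_zsmul ℝ, smul_eq_zero]
    simp only [hc, or_false, Int.cast_eq_zero]
    constructor
    · intro h
      have : (2*(j:ℤ)) = m := by linarith [sub_eq_zero.1 h]
      exact_mod_cast this
    · intro h
      have : (2*(j:ℤ)) = m := by exact_mod_cast h
      omega
  have hterm : ∀ j ∈ range (m+1),
      ((Nat.choose m j : ℝ≥0∞) • Measure.dirac ((2*(j:ℤ) - m) • c)) {0}
      = if 2*j = m then (Nat.choose m j : ℝ≥0∞) else 0 := by
    intro j _
    rw [Measure.smul_apply, Measure.dirac_apply' _ (measurableSet_singleton _)]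
    by_cases h : 2*j = m
    · simp [Set.indicator, ((key j).2 h), h]
    · have : ¬ ((2*(j:ℤ) - m) • c = 0) := fun hh => h ((key j).1 hh)
      simp [Set.indicator, this, h]
  rw [Finset.sum_congr rfl hterm]
  by_cases hm : Even m
  · obtain ⟨r, hr⟩ := hm
    have h2 : ∀ j, 2*j = m ↔ j = r := by omega
    simp only [h2]
    rw [Finset.sum_ite_eq' (range (m+1)) r (fun j => (Nat.choose m j : ℝ≥0∞))]
    have hr2 : r ∈ range (m+1) := by simp; omega
    have hr3 : m/2 = r := by omega
    simp only [hr2, if_true]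
    rw [if_pos ⟨r, hr⟩, hr3]
  · have : ∀ j ∈ range (m+1), (if 2*j = m then (Nat.choose m j : ℝ≥0∞) else 0) = 0 := by
      intro j _
      have hne : ¬ (2*j = m) := fun h => hm ⟨j, by omega⟩
      simp [hne]
    rw [Finset.sum_congr rfl this]
    simp [hm]

end BinSum

theorem natBinomLB : ∀ k : ℕ, 1 ≤ k → 4^k ≤ 2*k*(Nat.choose (2*k) k) := by
  intro k hk
  rcases lt_or_ge k 4 with h4 | h4
  · interval_cases k <;> decide
  · have h := Nat.four_pow_lt_mul_centralBinom k h4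
    rw [Nat.centralBinom] at h
    calc 4^k ≤ k * Nat.choose (2*k) k := h.le
    _ ≤ 2*k*(Nat.choose (2*k) k) := by nlinarith

theorem realBinomLB (k : ℕ) (hk : 1 ≤ k) :
    (1 : ℝ) / (2*k) ≤ (Nat.choose (2*k) k : ℝ) * ((1:ℝ)/4)^k := by
  have h := natBinomLB k hk
  have h' : (4:ℝ)^k ≤ 2*k*(Nat.choose (2*k) k) := by exact_mod_cast h
  have hkpos : (0:ℝ) < 2*k := by positivity
  rw [div_pow, one_pow, mul_div_assoc' ,div_le_div_iff₀ hkpos (by positivity)]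
  nlinarith

/-- Blow-up at frequency 0 of the formal solution of u̇ = u² with u₀(x) = cos(c·x):
(i) mass of the convolution powers of μ = (δ_c + δ_{−c})/2 at {0};
(ii) a lower bound for the central binomial coefficient;
(iii) divergence of the frequency-0 power series as t → 1⁻. -/
theorem stmt10 (d : ℕ) [NeZero d] (c : EuclideanSpace ℝ (Fin d)) (hc : c ≠ 0)
    (μ : Measure (EuclideanSpace ℝ (Fin d)))
    (hμ : μ = ((1:ℝ≥0∞)/2) • (Measure.dirac c + Measure.dirac (-c))) :
    -- (i)
    (∀ m : ℕ, 1 ≤ m →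
      (Even m → measConvPow μ m {0} = (Nat.choose m (m/2) : ℝ≥0∞) * ((1:ℝ≥0∞)/2)^m) ∧
      (Odd m → measConvPow μ m {0} = 0)) ∧
    -- (ii)
    (∀ k : ℕ, 1 ≤ k →
      (1 : ℝ) / (2*k) ≤ (Nat.choose (2*k) k : ℝ) * ((1:ℝ)/4)^k) ∧
    -- (iii)
    (∀ t : ℝ, 0 ≤ t → t < 1 →
      (∑' n : ℕ, ENNReal.ofReal (t^n) * measConvPow μ (n+1) {0}
        = ∑' k : ℕ, (Nat.choose (2*(k+1)) (k+1) : ℝ≥0∞) * ((1:ℝ≥0∞)/4)^(k+1)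
            * ENNReal.ofReal (t^(2*(k+1)-1))) ∧
      (∑' k : ℕ, ENNReal.ofReal (t^(2*(k+1)-1) / (2*(k+1)))
        ≤ ∑' n : ℕ, ENNReal.ofReal (t^n) * measConvPow μ (n+1) {0})) ∧
    Filter.Tendsto (fun t : ℝ => ∑' n : ℕ, ENNReal.ofReal (t^n) * measConvPow μ (n+1) {0})
      (nhdsWithin 1 (Set.Iio 1)) (nhds ⊤) := by
  -- part (i)
  have hI : ∀ m : ℕ, 1 ≤ m →
      (Even m → measConvPow μ m {0} = (Nat.choose m (m/2) : ℝ≥0∞) * ((1:ℝ≥0∞)/2)^m) ∧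
      (Odd m → measConvPow μ m {0} = 0) := by
    intro m hm
    have h := convPow_eq c μ hμ m hm
    have h0 : measConvPow μ m {0} = ((1:ℝ≥0∞)/2)^m * binSum c m {0} := by
      rw [h, Measure.smul_apply, smul_eq_mul]
    rw [binSum_apply_zero c hc m] at h0
    constructor
    · intro he
      rw [h0, if_pos he, mul_comm]
    · intro ho
      rw [h0, if_neg (Nat.not_even_iff_odd.2 ho), mul_zero]
  -- half-power identity
  have hhalf : ∀ k : ℕ, ((1:ℝ≥0∞)/2)^(2*(k+1)) = ((1:ℝ≥0∞)/4)^(k+1) := by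
    intro k
    rw [pow_mul]
    congr 1
    rw [pow_two]
    rw [one_div, one_div, ← ENNReal.mul_inv (by norm_num) (by norm_num)]
    norm_num
  -- mass at even indices
  have hmass : ∀ k : ℕ, measConvPow μ (2*k+2) {0}
      = (Nat.choose (2*(k+1)) (k+1) : ℝ≥0∞) * ((1:ℝ≥0∞)/4)^(k+1) := by
    intro k
    have hm : (1:ℕ) ≤ 2*k+2 := by omega
    have he : Even (2*k+2) := ⟨k+1, by ring⟩
    have := (hI (2*k+2) hm).1 he
    rw [this]
    have h1 : (2*k+2)/2 = k+1 := by omega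
    have h2 : 2*k+2 = 2*(k+1) := by ring
    rw [h1, h2, hhalf]
  have hodd : ∀ k : ℕ, measConvPow μ (2*k+1) {0} = 0 := by
    intro k
    exact (hI (2*k+1) (by omega)).2 ⟨k, by ring⟩
  have hscalar : ∀ k : ℕ, ENNReal.ofReal ((1:ℝ)/(2*((k:ℝ)+1)))
      ≤ (Nat.choose (2*(k+1)) (k+1) : ℝ≥0∞) * ((1:ℝ≥0∞)/4)^(k+1) := by
    intro k
    have hb := realBinomLB (k+1) (by omega)
    calc ENNReal.ofReal ((1:ℝ)/(2*((k:ℝ)+1)))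
        ≤ ENNReal.ofReal ((Nat.choose (2*(k+1)) (k+1) : ℝ) * ((1:ℝ)/4)^(k+1)) := by
          refine ENNReal.ofReal_le_ofReal ?_
          have : ((k:ℝ)+1) = ((k+1 : ℕ) : ℝ) := by push_cast; ring
          rw [this]
          exact hb
      _ = (Nat.choose (2*(k+1)) (k+1) : ℝ≥0∞) * ((1:ℝ≥0∞)/4)^(k+1) := by
          rw [ENNReal.ofReal_mul (Nat.cast_nonneg _), ENNReal.ofReal_natCast,
            ENNReal.ofReal_pow (by norm_num)]
          congr 2
          rw [ENNReal.ofReal_div_of_pos (by norm_num), ENNReal.ofReal_one, ENNReal.ofReal_ofNat]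
  have hEq : ∀ t : ℝ, 0 ≤ t → t < 1 →
      (∑' n : ℕ, ENNReal.ofReal (t^n) * measConvPow μ (n+1) {0}
        = ∑' k : ℕ, (Nat.choose (2*(k+1)) (k+1) : ℝ≥0∞) * ((1:ℝ≥0∞)/4)^(k+1)
            * ENNReal.ofReal (t^(2*(k+1)-1))) := by
    intro t ht0 ht1
    have hinj : Function.Injective (fun k : ℕ => 2*k+1) := by
      intro a b h
      simp only at h
      omega
    have hsupp : Function.support (fun n : ℕ => ENNReal.ofReal (t^n) * measConvPow μ (n+1) {0})
        ⊆ Set.range (fun k : ℕ => 2*k+1) := by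
      intro n hn
      rcases Nat.even_or_odd n with he | ho
      · obtain ⟨r, hr⟩ := he
        exfalso
        apply hn
        have h1 : n + 1 = 2*r + 1 := by omega
        simp only [h1, hodd r, mul_zero]
      · obtain ⟨r, hr⟩ := ho
        exact ⟨r, hr.symm⟩
    rw [← hinj.tsum_eq hsupp]
    refine tsum_congr fun k => ?_
    have h2 : 2*(k+1)-1 = 2*k+1 := by omega
    rw [show 2*k+1+1 = 2*k+2 from rfl, hmass k, h2]
    ring
  have hLe : ∀ t : ℝ, 0 ≤ t → t < 1 →
      (∑' k : ℕ, ENNReal.ofReal (t^(2*(k+1)-1) / (2*(k+1)))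
        ≤ ∑' n : ℕ, ENNReal.ofReal (t^n) * measConvPow μ (n+1) {0}) := by
    intro t ht0 ht1
    rw [hEq t ht0 ht1]
    refine ENNReal.tsum_le_tsum fun k => ?_
    have hte : (0:ℝ) ≤ t^(2*(k+1)-1) := pow_nonneg ht0 _
    rw [div_eq_mul_one_div, ENNReal.ofReal_mul hte, mul_comm (ENNReal.ofReal (t^(2*(k+1)-1)))]
    exact mul_le_mul_left (hscalar k) _
  refine ⟨hI, fun k hk => realBinomLB k hk, fun t ht0 ht1 => ⟨hEq t ht0 ht1, hLe t ht0 ht1⟩, ?_⟩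
  -- Tendsto ⊤
  refine ENNReal.tendsto_nhds_top fun n => ?_
  have hH := Real.tendsto_sum_range_one_div_nat_succ_atTop
  obtain ⟨N, hN⟩ := (hH.eventually_ge_atTop (2*(n+2) : ℝ)).exists
  have hS : ((n:ℝ)+1) < ∑ k ∈ range N, (1:ℝ)/(2*((k:ℝ)+1)) := by
    have : ∑ k ∈ range N, (1:ℝ)/(2*((k:ℝ)+1)) = (1/2) * ∑ i ∈ range N, (1:ℝ)/((i:ℝ)+1) := by
      rw [Finset.mul_sum]
      refine Finset.sum_congr rfl fun i _ => by field_simp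
    rw [this]
    nlinarith
  have hg : Filter.Tendsto (fun t : ℝ => ∑ k ∈ range N, t^(2*(k+1)-1)/(2*((k:ℝ)+1)))
      (nhds 1) (nhds (∑ k ∈ range N, (1:ℝ)/(2*((k:ℝ)+1)))) := by
    have : Continuous (fun t : ℝ => ∑ k ∈ range N, t^(2*(k+1)-1)/(2*((k:ℝ)+1))) := by
      refine continuous_finset_sum _ fun k _ => ?_
      exact (continuous_pow _).div_const _
    have h1 := this.tendsto 1
    convert h1 using 2
    simp
  have hev1 : ∀ᶠ t in nhds (1:ℝ), ((n:ℝ)+1) < ∑ k ∈ range N, t^(2*(k+1)-1)/(2*((k:ℝ)+1)) :=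
    hg.eventually (eventually_gt_nhds hS)
  have hev2 : ∀ᶠ t in nhds (1:ℝ), (0:ℝ) < t := eventually_gt_nhds zero_lt_one
  have hev3 : ∀ᶠ t in nhdsWithin (1:ℝ) (Set.Iio 1), t ∈ Set.Iio (1:ℝ) :=
    eventually_mem_nhdsWithin
  filter_upwards [hev1.filter_mono nhdsWithin_le_nhds, hev2.filter_mono nhdsWithin_le_nhds,
    hev3] with t hgt ht0 ht1
  have ht0' : (0:ℝ) ≤ t := ht0.le
  have ht1' : t < 1 := ht1
  calc (n:ℝ≥0∞) ≤ ENNReal.ofReal n := by rw [ENNReal.ofReal_natCast]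
    _ < ENNReal.ofReal (∑ k ∈ range N, t^(2*(k+1)-1)/(2*((k:ℝ)+1))) := by
        exact (ENNReal.ofReal_lt_ofReal_iff_of_nonneg (Nat.cast_nonneg n)).2 (by linarith)
    _ = ∑ k ∈ range N, ENNReal.ofReal (t^(2*(k+1)-1)/(2*((k:ℝ)+1))) := by
        rw [ENNReal.ofReal_sum_of_nonneg]
        intro k _
        positivity
    _ ≤ ∑' k : ℕ, ENNReal.ofReal (t^(2*(k+1)-1)/(2*((k:ℝ)+1))) := ENNReal.sum_le_tsum _
    _ ≤ ∑' n : ℕ, ENNReal.ofReal (t^n) * measConvPow μ (n+1) {0} := hLe t ht0' ht1'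

end
end

section
/- Let d ≥ 1 be an integer, d₀ ∈ {1,…,d}, and write ξ = (ξ̄, ξ̃) ∈ ℝ^{d₀} × ℝ^{d−d₀}. Let v ∈ ℝ^d \ {0}, λ > 0, P(ξ) := v·ξ, and 𝓡 := {ξ ∈ ℝ^d : v·ξ ≥ 0 and |ξ̄| ≤ λ·(v·ξ)}. Let k₀ ≥ 1 be an integer, s < 0, r ∈ [1,∞] with conjugate exponent r′ (1/r + 1/r′ = 1), and σ ∈ ℝ with d₀/r′ + σ > 1/k₀. Then there exists C < ∞, depending only on d₀, λ, s, k₀, σ, r, such that for every measurable φ : ℝ^d → ℂ vanishing almost everywhere outside 𝓡: ∫_{𝓡} W_{s,k₀}(P(ξ))·|φ(ξ)| dξ ≤ C · ( ∫_{ℝ^{d₀}} ( ∫_{ℝ^{d−d₀}} (P(ξ̄,ξ̃)^{−σ} + 1)·|φ(ξ̄,ξ̃)| dξ̃ )^{r} dξ̄ )^{1/r}, with the usual essential-supremum modification in ξ̄ when r = ∞, both sides taking values in [0,∞]. -/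
open scoped ENNReal RealInnerProductSpace
open MeasureTheory
noncomputable section

/-- The weight W_{s,k₀}(ρ) := max(ρ^{−1/k₀}, ρ − 1/s)·e^{sρ} for ρ > 0, := ∞ at ρ = 0. -/
def Wsk (s : ℝ) (k₀ : ℕ) (ρ : ℝ) : ℝ≥0∞ :=
  if ρ = 0 then ⊤
  else ENNReal.ofReal (max (ρ ^ (-(1:ℝ)/(k₀:ℝ))) (ρ - 1/s) * Real.exp (s * ρ))

section Aux
open Set Real

/-- Polar-coordinates formula for the lower Lebesgue integral of a radial function. -/
lemma lintegral_fun_norm_addHaar' {E : Type*} [NormedAddCommGroup E] [NormedSpace ℝ E]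
    [MeasurableSpace E] [BorelSpace E] [FiniteDimensional ℝ E] [Nontrivial E]
    (μ : Measure E) [μ.IsAddHaarMeasure] (f : ℝ → ℝ≥0∞) (hf : Measurable f) :
    ∫⁻ x, f ‖x‖ ∂μ =
      μ.toSphere univ * ∫⁻ r in Ioi (0:ℝ),
        ENNReal.ofReal (r ^ (Module.finrank ℝ E - 1)) * f r := by
  have h1 := lintegral_subtype_comap (μ := μ) (measurableSet_singleton (0:E)).compl
    (fun x => f ‖x‖)
  have h2 := (μ.measurePreserving_homeomorphUnitSphereProd).lintegral_comp_emb
    (Homeomorph.measurableEmbedding _)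
    (fun p : Metric.sphere (0:E) 1 × Ioi (0:ℝ) => f p.2)
  have h3 := lintegral_prod (μ := μ.toSphere)
    (ν := Measure.volumeIoiPow (Module.finrank ℝ E - 1))
    (fun p : Metric.sphere (0:E) 1 × Ioi (0:ℝ) => f p.2)
    ((hf.comp measurable_subtype_coe).comp measurable_snd).aemeasurable
  have h4 := lintegral_withDensity_eq_lintegral_mul (Measure.comap Subtype.val volume)
    (f := fun r : Ioi (0:ℝ) => ENNReal.ofReal ((r : ℝ) ^ (Module.finrank ℝ E - 1)))
    ((measurable_subtype_coe.pow_const _).ennreal_ofReal)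
    (g := fun r : Ioi (0:ℝ) => f r)
    (hf.comp measurable_subtype_coe)
  have h5 := lintegral_subtype_comap (μ := (volume : Measure ℝ)) (s := Ioi (0:ℝ))
    measurableSet_Ioi
    (fun r : ℝ => ENNReal.ofReal (r ^ (Module.finrank ℝ E - 1)) * f r)
  calc
    ∫⁻ x, f ‖x‖ ∂μ = ∫⁻ x : ({0}ᶜ : Set E), f ‖(x:E)‖ ∂(μ.comap (↑)) := by
      rw [h1, restrict_compl_singleton]
    _ = ∫⁻ p : Metric.sphere (0:E) 1 × Ioi (0:ℝ), f p.2
          ∂(μ.toSphere.prod (.volumeIoiPow (Module.finrank ℝ E - 1))) := by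
      rw [← h2]; simp
    _ = μ.toSphere univ * ∫⁻ r : Ioi (0:ℝ), f r
          ∂(Measure.volumeIoiPow (Module.finrank ℝ E - 1)) := by
      rw [h3]; simp [lintegral_const, mul_comm]
    _ = _ := by
      rw [Measure.volumeIoiPow, h4]
      congr 1

/-- Finiteness of the integral of `(‖x‖^(-a)+1) e^(-c‖x‖)` for `a < d₀`. -/
lemma finite_radial (d₀ : ℕ) (hd₀ : 1 ≤ d₀) {a c : ℝ} (ha0 : 0 ≤ a) (ha : a < d₀) (hc : 0 < c) :
    ∫⁻ x : EuclideanSpace ℝ (Fin d₀),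
      ENNReal.ofReal ((‖x‖ ^ (-a) + 1) * Real.exp (-(c * ‖x‖))) < ⊤ := by
  haveI : Nontrivial (EuclideanSpace ℝ (Fin d₀)) := by
    apply Module.nontrivial_of_finrank_pos (R := ℝ)
    rw [finrank_euclideanSpace_fin]; omega
  have hfr : Module.finrank ℝ (EuclideanSpace ℝ (Fin d₀)) = d₀ := finrank_euclideanSpace_fin
  have hmeas : Measurable (fun t : ℝ => ENNReal.ofReal ((t ^ (-a) + 1) * Real.exp (-(c * t)))) := by
    fun_prop
  rw [lintegral_fun_norm_addHaar' volume _ hmeas]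
  refine ENNReal.mul_lt_top (measure_lt_top _ _) ?_
  set n := Module.finrank ℝ (EuclideanSpace ℝ (Fin d₀)) - 1 with hn
  have hncast : (n : ℝ) = (d₀ : ℝ) - 1 := by
    rw [hn, hfr, Nat.cast_sub hd₀, Nat.cast_one]
  set h : ℝ → ℝ := fun r => r ^ ((d₀:ℝ) - 1 - a) * Real.exp (-(c * r))
      + r ^ ((d₀:ℝ) - 1) * Real.exp (-(c * r)) with hh
  have hint : IntegrableOn h (Ioi (0:ℝ)) := by
    apply Integrable.add
    · have := integrableOn_rpow_mul_exp_neg_mul_rpow (p := 1) (s := (d₀:ℝ) - 1 - a) (b := c)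
        (by push_cast; linarith) one_pos hc
      simpa [Real.rpow_one, neg_mul, IntegrableOn] using this
    · have h1d : (1:ℝ) ≤ (d₀:ℝ) := by exact_mod_cast hd₀
      have := integrableOn_rpow_mul_exp_neg_mul_rpow (p := 1) (s := (d₀:ℝ) - 1) (b := c)
        (by linarith) one_pos hc
      simpa [Real.rpow_one, neg_mul, IntegrableOn] using this
  have heq : ∀ r ∈ Ioi (0:ℝ),
      ENNReal.ofReal (r ^ n) * ENNReal.ofReal ((r ^ (-a) + 1) * Real.exp (-(c * r)))
        = ENNReal.ofReal (h r) := by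
    intro r hr
    rw [mem_Ioi] at hr
    rw [← ENNReal.ofReal_mul (by positivity)]
    congr 1
    have h1 : (r : ℝ) ^ n = r ^ ((d₀:ℝ) - 1) := by
      rw [← Real.rpow_natCast r n, hncast]
    rw [h1]
    simp only [hh]
    have h2 : r ^ ((d₀:ℝ) - 1) * r ^ (-a) = r ^ ((d₀:ℝ) - 1 - a) := by
      rw [← Real.rpow_add hr]; ring_nf
    rw [← h2]
    ring
  calc ∫⁻ r in Ioi (0:ℝ), ENNReal.ofReal (r ^ n)
          * ENNReal.ofReal ((r ^ (-a) + 1) * Real.exp (-(c * r)))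
      = ∫⁻ r in Ioi (0:ℝ), ENNReal.ofReal (h r) :=
        setLIntegral_congr_fun measurableSet_Ioi heq
    _ < ⊤ := hint.setLIntegral_lt_top

set_option maxHeartbeats 1000000 in
/-- The key pointwise inequality on the cone. -/
lemma key_pointwise {lam s σ β ρ t : ℝ} {k₀ : ℕ} (hk₀ : 1 ≤ k₀) (hlam : 0 < lam) (hs : s < 0)
    (hβ0 : 0 ≤ β) (hβσ : 1/(k₀:ℝ) - σ ≤ β) (hρ : 0 < ρ) (ht : 0 < t) (htρ : t ≤ lam * ρ) :
    max (ρ ^ (-(1:ℝ)/(k₀:ℝ))) (ρ - 1/s) * Real.exp (s * ρ) ≤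
      (lam ^ β + (3 - 3/s)) * ((t ^ (-β) + 1) * Real.exp (s/(2*lam) * t)) * (ρ ^ (-σ) + 1) := by
  have hk0R : (0:ℝ) < (k₀:ℝ) := by positivity
  have hρσ : 0 ≤ ρ ^ (-σ) := rpow_nonneg hρ.le _
  have htβ : 0 ≤ t ^ (-β) := rpow_nonneg ht.le _
  have hρk : 0 ≤ ρ ^ (-(1:ℝ)/(k₀:ℝ)) := rpow_nonneg hρ.le _
  have hlamβ : (0:ℝ) < lam ^ β := rpow_pos_of_pos hlam _
  have h1s : 1/s < 0 := div_neg_of_pos_of_neg one_pos hs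
  have h3s : 3/s < 0 := div_neg_of_pos_of_neg three_pos hs
  have hM : (0:ℝ) ≤ 3 - 3/s := by linarith
  have hsρ2 : s * ρ / 2 ≤ 0 := by nlinarith
  have hexp1 : Real.exp (s*ρ/2) ≤ 1 := exp_le_one_iff.2 hsρ2
  have hexppos : (0:ℝ) < Real.exp (s*ρ/2) := exp_pos _
  have hexp2 : Real.exp (s*ρ/2) ≤ Real.exp (s/(2*lam) * t) := by
    apply exp_le_exp.2
    rw [div_mul_eq_mul_div, le_div_iff₀ (by positivity)]
    nlinarith [mul_le_mul_of_nonpos_left htρ hs.le]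
  have hB : (ρ - 1/s) * Real.exp (s*ρ/2) ≤ 2 - 3/s := by
    set u := Real.exp (s*ρ/2) with hu
    have h1 : -(s*ρ/2) + 1 ≤ u⁻¹ := by
      rw [hu, ← Real.exp_neg]
      exact Real.add_one_le_exp _
    have h5 : (-(s*ρ/2)+1) * u ≤ 1 := by
      calc (-(s*ρ/2)+1)*u ≤ u⁻¹ * u := mul_le_mul_of_nonneg_right h1 hexppos.le
        _ = 1 := inv_mul_cancel₀ hexppos.ne'
    have hs' : (0:ℝ) < -s := neg_pos.2 hs
    have hρu : ρ * u ≤ 2/(-s) := by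
      rw [le_div_iff₀ hs']
      nlinarith
    have h1su : (-(1/s)) * u ≤ -(1/s) :=
      mul_le_of_le_one_right (by linarith) hexp1
    rw [div_neg] at hρu
    have hexpand : (ρ - 1/s) * u = ρ*u + (-(1/s))*u := by ring
    rw [hexpand]
    have e : -(2/s) + -(1/s) = -(3/s) := by ring
    linarith
  have hA : ρ ^ (-(1:ℝ)/(k₀:ℝ)) * Real.exp (s*ρ/2) ≤ lam ^ β * t ^ (-β) * ρ ^ (-σ) + 1 := by
    have hprod : 0 ≤ lam ^ β * t ^ (-β) * ρ ^ (-σ) := by positivity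
    rcases le_or_gt 1 ρ with h1 | h1
    · have hle1 : ρ ^ (-(1:ℝ)/(k₀:ℝ)) ≤ 1 := by
        apply rpow_le_one_of_one_le_of_nonpos h1
        rw [neg_div]
        exact neg_nonpos.2 (by positivity)
      nlinarith
    · have e1 : ρ ^ (-(1:ℝ)/(k₀:ℝ)) = ρ ^ (-σ) * ρ ^ (σ - 1/(k₀:ℝ)) := by
        rw [← Real.rpow_add hρ]
        congr 1
        ring
      have e2 : ρ ^ (σ - 1/(k₀:ℝ)) ≤ ρ ^ (-β) :=
        rpow_le_rpow_of_exponent_ge hρ h1.le (by linarith)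
      have e3 : ρ ^ (-β) ≤ (t/lam) ^ (-β) := by
        apply rpow_le_rpow_of_nonpos (by positivity) _ (neg_nonpos.2 hβ0)
        rw [div_le_iff₀ hlam]
        nlinarith
      have e4 : (t/lam) ^ (-β) = lam ^ β * t ^ (-β) := by
        rw [Real.div_rpow ht.le hlam.le, Real.rpow_neg hlam.le, div_eq_mul_inv, inv_inv, mul_comm]
      calc ρ ^ (-(1:ℝ)/(k₀:ℝ)) * Real.exp (s*ρ/2) ≤ ρ ^ (-(1:ℝ)/(k₀:ℝ)) * 1 := by
            apply mul_le_mul_of_nonneg_left hexp1 hρk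
        _ = ρ ^ (-σ) * ρ ^ (σ - 1/(k₀:ℝ)) := by rw [mul_one, e1]
        _ ≤ ρ ^ (-σ) * (lam ^ β * t ^ (-β)) := by
            apply mul_le_mul_of_nonneg_left _ hρσ
            calc ρ ^ (σ - 1/(k₀:ℝ)) ≤ ρ ^ (-β) := e2
              _ ≤ (t/lam) ^ (-β) := e3
              _ = lam ^ β * t ^ (-β) := e4
        _ ≤ lam ^ β * t ^ (-β) * ρ ^ (-σ) + 1 := by nlinarith
  have hmax : max (ρ ^ (-(1:ℝ)/(k₀:ℝ))) (ρ - 1/s) ≤ ρ ^ (-(1:ℝ)/(k₀:ℝ)) + (ρ - 1/s) :=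
    max_le_add_of_nonneg hρk (by linarith)
  have hsplit : Real.exp (s*ρ) = Real.exp (s*ρ/2) * Real.exp (s*ρ/2) := by
    rw [← Real.exp_add]; ring_nf
  have hstep : max (ρ ^ (-(1:ℝ)/(k₀:ℝ))) (ρ - 1/s) * Real.exp (s * ρ) ≤
      ((lam ^ β * t ^ (-β) * ρ ^ (-σ) + 1) + (2 - 3/s)) * Real.exp (s/(2*lam) * t) := by
    rw [hsplit, ← mul_assoc]
    calc max (ρ ^ (-(1:ℝ)/(k₀:ℝ))) (ρ - 1/s) * Real.exp (s*ρ/2) * Real.exp (s*ρ/2)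
        ≤ ((lam ^ β * t ^ (-β) * ρ ^ (-σ) + 1) + (2 - 3/s)) * Real.exp (s*ρ/2) := by
          have hkey : max (ρ ^ (-(1:ℝ)/(k₀:ℝ))) (ρ - 1/s) * Real.exp (s*ρ/2) ≤
              (lam ^ β * t ^ (-β) * ρ ^ (-σ) + 1) + (2 - 3/s) := by
            calc max (ρ ^ (-(1:ℝ)/(k₀:ℝ))) (ρ - 1/s) * Real.exp (s*ρ/2)
                ≤ (ρ ^ (-(1:ℝ)/(k₀:ℝ)) + (ρ - 1/s)) * Real.exp (s*ρ/2) :=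
                  mul_le_mul_of_nonneg_right hmax hexppos.le
              _ = ρ ^ (-(1:ℝ)/(k₀:ℝ)) * Real.exp (s*ρ/2)
                    + (ρ - 1/s) * Real.exp (s*ρ/2) := by ring
              _ ≤ (lam ^ β * t ^ (-β) * ρ ^ (-σ) + 1) + (2 - 3/s) := add_le_add hA hB
          exact mul_le_mul_of_nonneg_right hkey hexppos.le
      _ ≤ ((lam ^ β * t ^ (-β) * ρ ^ (-σ) + 1) + (2 - 3/s)) * Real.exp (s/(2*lam) * t) := by
          apply mul_le_mul_of_nonneg_left hexp2
          nlinarith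
  refine hstep.trans ?_
  have halg : (lam ^ β * t ^ (-β) * ρ ^ (-σ) + 1) + (2 - 3/s) ≤
      (lam ^ β + (3 - 3/s)) * ((t ^ (-β) + 1) * (ρ ^ (-σ) + 1)) := by
    nlinarith [mul_nonneg htβ hρσ, mul_nonneg hlamβ.le htβ, mul_nonneg hlamβ.le hρσ,
      hlamβ.le, mul_nonneg hM (mul_nonneg htβ hρσ), mul_nonneg hM htβ, mul_nonneg hM hρσ]
  calc ((lam ^ β * t ^ (-β) * ρ ^ (-σ) + 1) + (2 - 3/s)) * Real.exp (s/(2*lam) * t)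
      ≤ ((lam ^ β + (3 - 3/s)) * ((t ^ (-β) + 1) * (ρ ^ (-σ) + 1)))
          * Real.exp (s/(2*lam) * t) :=
        mul_le_mul_of_nonneg_right halg (exp_pos _).le
    _ = (lam ^ β + (3 - 3/s)) * ((t ^ (-β) + 1) * Real.exp (s/(2*lam) * t)) * (ρ ^ (-σ) + 1) := by
        ring

lemma add_one_rpow_le {a q : ℝ} (ha : 0 ≤ a) (hq : 1 ≤ q) :
    (a + 1) ^ q ≤ 2 ^ q * (a ^ q + 1) := by
  have h2q : (0:ℝ) < 2 ^ q := rpow_pos_of_pos two_pos q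
  have haq : 0 ≤ a ^ q := rpow_nonneg ha q
  rcases le_or_gt a 1 with h | h
  · calc (a+1)^q ≤ 2^q := Real.rpow_le_rpow (by linarith) (by linarith) (by linarith)
      _ ≤ 2^q * (a^q+1) := by nlinarith
  · calc (a+1)^q ≤ (2*a)^q := Real.rpow_le_rpow (by linarith) (by linarith) (by linarith)
      _ = 2^q * a^q := Real.mul_rpow (by norm_num) ha
      _ ≤ 2^q * (a^q+1) := by nlinarith

set_option maxHeartbeats 1000000 in
/-- Reduction: the weighted cone integral is bounded by `∫ G(ξ̄) F(ξ̄)`. -/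
lemma reduction17 (d₀ : ℕ) (hd₀ : 1 ≤ d₀) (lam : ℝ) (hlam : 0 < lam)
    (k₀ : ℕ) (hk₀ : 1 ≤ k₀) (s : ℝ) (hs : s < 0) (σ β : ℝ)
    (hβ0 : 0 ≤ β) (hβσ : 1/(k₀:ℝ) - σ ≤ β)
    (dr : ℕ) (v : EuclideanSpace ℝ (Fin d₀) × EuclideanSpace ℝ (Fin dr)) (hv : v ≠ 0)
    (φ : EuclideanSpace ℝ (Fin d₀) × EuclideanSpace ℝ (Fin dr) → ℂ) (hφm : Measurable φ) :
    (∫⁻ ξ in {ξ : EuclideanSpace ℝ (Fin d₀) × EuclideanSpace ℝ (Fin dr) |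
          0 ≤ ⟪v.1, ξ.1⟫ + ⟪v.2, ξ.2⟫ ∧ ‖ξ.1‖ ≤ lam * (⟪v.1, ξ.1⟫ + ⟪v.2, ξ.2⟫)},
        Wsk s k₀ (⟪v.1, ξ.1⟫ + ⟪v.2, ξ.2⟫) * (‖φ ξ‖₊ : ℝ≥0∞))
      ≤ ∫⁻ x : EuclideanSpace ℝ (Fin d₀),
          (ENNReal.ofReal ((lam ^ β + (3 - 3/s)) *
            ((‖x‖ ^ (-β) + 1) * Real.exp (s/(2*lam) * ‖x‖)))) *
          ∫⁻ y : EuclideanSpace ℝ (Fin dr),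
            ((ENNReal.ofReal (⟪v.1, x⟫ + ⟪v.2, y⟫)) ^ (-σ) + 1) * (‖φ (x, y)‖₊ : ℝ≥0∞) := by
  haveI : Nontrivial (EuclideanSpace ℝ (Fin d₀)) := by
    apply Module.nontrivial_of_finrank_pos (R := ℝ)
    rw [finrank_euclideanSpace_fin]; omega
  haveI hHaar : (volume : Measure
      (EuclideanSpace ℝ (Fin d₀) × EuclideanSpace ℝ (Fin dr))).IsAddHaarMeasure :=
    Measure.prod.instIsAddHaarMeasure _ _
  have hpcont : Continuous (fun ξ : EuclideanSpace ℝ (Fin d₀) × EuclideanSpace ℝ (Fin dr) =>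
      ⟪v.1, ξ.1⟫ + ⟪v.2, ξ.2⟫) :=
    (Continuous.inner continuous_const continuous_fst).add
      (Continuous.inner continuous_const continuous_snd)
  have h3s : 3/s < 0 := div_neg_of_pos_of_neg three_pos hs
  have hK0 : 0 < lam ^ β + (3 - 3/s) := by
    have := rpow_pos_of_pos hlam β; linarith
  -- null sets
  have hN1 : volume {ξ : EuclideanSpace ℝ (Fin d₀) × EuclideanSpace ℝ (Fin dr) | ξ.1 = 0} = 0 := by
    have hset : {ξ : EuclideanSpace ℝ (Fin d₀) × EuclideanSpace ℝ (Fin dr) | ξ.1 = 0}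
        = ((Submodule.prod (⊥ : Submodule ℝ (EuclideanSpace ℝ (Fin d₀)))
            (⊤ : Submodule ℝ (EuclideanSpace ℝ (Fin dr)))) :
            Set (EuclideanSpace ℝ (Fin d₀) × EuclideanSpace ℝ (Fin dr))) := by
      ext ξ
      simp only [Set.mem_setOf_eq, SetLike.mem_coe, Submodule.mem_prod, Submodule.mem_bot,
        Submodule.mem_top, and_true]
    rw [hset]
    apply Measure.addHaar_submodule
    obtain ⟨x₀, hx₀⟩ := exists_ne (0 : EuclideanSpace ℝ (Fin d₀))
    intro htop
    have hmem := Submodule.eq_top_iff'.mp htop (x₀, 0)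
    rw [Submodule.mem_prod] at hmem
    exact hx₀ (by simpa using hmem.1)
  have hN2 : volume {ξ : EuclideanSpace ℝ (Fin d₀) × EuclideanSpace ℝ (Fin dr) |
      ⟪v.1, ξ.1⟫ + ⟪v.2, ξ.2⟫ = 0} = 0 := by
    set Lm : (EuclideanSpace ℝ (Fin d₀) × EuclideanSpace ℝ (Fin dr)) →ₗ[ℝ] ℝ :=
      { toFun := fun ξ => ⟪v.1, ξ.1⟫ + ⟪v.2, ξ.2⟫
        map_add' := by intro x y; simp [inner_add_right]; ring
        map_smul' := by intro c x; simp [inner_smul_right]; ring } with hLm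
    have hset : {ξ : EuclideanSpace ℝ (Fin d₀) × EuclideanSpace ℝ (Fin dr) |
        ⟪v.1, ξ.1⟫ + ⟪v.2, ξ.2⟫ = 0} = (LinearMap.ker Lm :
          Set (EuclideanSpace ℝ (Fin d₀) × EuclideanSpace ℝ (Fin dr))) := by
      ext ξ; simp [LinearMap.mem_ker, hLm]
    rw [hset]
    apply Measure.addHaar_submodule
    intro htop
    have hv0 : Lm v = 0 := LinearMap.mem_ker.mp (htop ▸ Submodule.mem_top)
    simp only [hLm, LinearMap.coe_mk, AddHom.coe_mk] at hv0
    have h1 : (0:ℝ) ≤ ⟪v.1, v.1⟫ := real_inner_self_nonneg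
    have h2 : (0:ℝ) ≤ ⟪v.2, v.2⟫ := real_inner_self_nonneg
    obtain ⟨e1, e2⟩ := (add_eq_zero_iff_of_nonneg h1 h2).mp hv0
    have hv1 : v.1 = 0 := inner_self_eq_zero.mp e1
    have hv2 : v.2 = 0 := inner_self_eq_zero.mp e2
    exact hv (Prod.ext hv1 hv2)
  have hae1 : ∀ᵐ ξ : EuclideanSpace ℝ (Fin d₀) × EuclideanSpace ℝ (Fin dr), ξ.1 ≠ 0 := by
    rw [ae_iff]
    simpa using hN1
  have hae2 : ∀ᵐ ξ : EuclideanSpace ℝ (Fin d₀) × EuclideanSpace ℝ (Fin dr),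
      ⟪v.1, ξ.1⟫ + ⟪v.2, ξ.2⟫ ≠ 0 := by
    rw [ae_iff]
    simpa using hN2
  set S := {ξ : EuclideanSpace ℝ (Fin d₀) × EuclideanSpace ℝ (Fin dr) |
      0 ≤ ⟪v.1, ξ.1⟫ + ⟪v.2, ξ.2⟫ ∧ ‖ξ.1‖ ≤ lam * (⟪v.1, ξ.1⟫ + ⟪v.2, ξ.2⟫)} with hSdef
  have hSm : MeasurableSet S := by
    rw [hSdef, Set.setOf_and]
    apply MeasurableSet.inter
    · exact (isClosed_le continuous_const hpcont).measurableSet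
    · exact (isClosed_le continuous_fst.norm (continuous_const.mul hpcont)).measurableSet
  set g : EuclideanSpace ℝ (Fin d₀) × EuclideanSpace ℝ (Fin dr) → ℝ≥0∞ := fun ξ =>
    ENNReal.ofReal ((lam ^ β + (3 - 3/s)) *
      ((‖ξ.1‖ ^ (-β) + 1) * Real.exp (s/(2*lam) * ‖ξ.1‖))) *
    (((ENNReal.ofReal (⟪v.1, ξ.1⟫ + ⟪v.2, ξ.2⟫)) ^ (-σ) + 1) * (‖φ ξ‖₊ : ℝ≥0∞)) with hg
  have hgmeas : Measurable g := by
    apply Measurable.mul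
    · fun_prop
    · exact (((ENNReal.continuous_rpow_const.measurable).comp
        hpcont.measurable.ennreal_ofReal).add measurable_const).mul hφm.nnnorm.coe_nnreal_ennreal
  have step1 : (∫⁻ ξ in S, Wsk s k₀ (⟪v.1, ξ.1⟫ + ⟪v.2, ξ.2⟫) * (‖φ ξ‖₊ : ℝ≥0∞)) ≤
      ∫⁻ ξ, g ξ := by
    rw [← lintegral_indicator hSm]
    refine lintegral_mono_ae ?_
    filter_upwards [hae1, hae2] with ξ h1 h2
    by_cases hmem : ξ ∈ S
    · rw [Set.indicator_of_mem hmem]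
      have hmem' := hmem
      rw [hSdef, Set.mem_setOf_eq] at hmem'
      obtain ⟨ha, hb⟩ := hmem'
      have hppos : 0 < ⟪v.1, ξ.1⟫ + ⟪v.2, ξ.2⟫ := lt_of_le_of_ne ha (Ne.symm h2)
      have htpos : 0 < ‖ξ.1‖ := norm_pos_iff.2 h1
      simp only [hg]
      rw [← mul_assoc]
      refine mul_le_mul_left ?_ _
      rw [Wsk, if_neg h2]
      have hXeq : ((ENNReal.ofReal (⟪v.1, ξ.1⟫ + ⟪v.2, ξ.2⟫)) ^ (-σ) + 1)
          = ENNReal.ofReal ((⟪v.1, ξ.1⟫ + ⟪v.2, ξ.2⟫) ^ (-σ) + 1) := by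
        rw [ENNReal.ofReal_rpow_of_pos hppos,
          ENNReal.ofReal_add (rpow_nonneg hppos.le _) zero_le_one, ENNReal.ofReal_one]
      rw [hXeq, ← ENNReal.ofReal_mul (mul_nonneg hK0.le (by positivity))]
      exact ENNReal.ofReal_le_ofReal (key_pointwise hk₀ hlam hs hβ0 hβσ hppos htpos hb)
    · rw [Set.indicator_of_notMem hmem]; exact zero_le
  refine step1.trans (le_of_eq ?_)
  rw [Measure.volume_eq_prod, lintegral_prod _ hgmeas.aemeasurable]
  refine lintegral_congr fun x => ?_
  simp only [hg]
  exact lintegral_const_mul' _ _ ENNReal.ofReal_ne_top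

end Aux

/-- Embedding of the anisotropic mixed-norm space on the cone
𝓡 = {v·ξ ≥ 0, |ξ̄| ≤ λ v·ξ} into the maximal weighted L¹ space:
∫_𝓡 W_{s,k₀}(v·ξ)|φ| dξ ≤ C ‖(P^{−σ}+1)φ‖_{L^r_{ξ̄} L¹_{ξ̃}},
with C depending only on d₀, λ, s, k₀, σ, r. -/
theorem stmt17 (d₀ : ℕ) (hd₀ : 1 ≤ d₀) (lam : ℝ) (hlam : 0 < lam)
    (k₀ : ℕ) (hk₀ : 1 ≤ k₀) (s : ℝ) (hs : s < 0) (σ : ℝ)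
    (r : ℝ≥0∞) (hr : 1 ≤ r)
    (hσ : (1:ℝ)/(k₀:ℝ) < (d₀:ℝ) * (1 - (r⁻¹).toReal) + σ) :
    ∃ C : ℝ, 0 ≤ C ∧
      ∀ (dr : ℕ)
        (v : EuclideanSpace ℝ (Fin d₀) × EuclideanSpace ℝ (Fin dr)), v ≠ 0 →
      ∀ φ : EuclideanSpace ℝ (Fin d₀) × EuclideanSpace ℝ (Fin dr) → ℂ,
        Measurable φ →
        (∀ᵐ ξ : EuclideanSpace ℝ (Fin d₀) × EuclideanSpace ℝ (Fin dr),
          ¬(0 ≤ ⟪v.1, ξ.1⟫ + ⟪v.2, ξ.2⟫ ∧ ‖ξ.1‖ ≤ lam * (⟪v.1, ξ.1⟫ + ⟪v.2, ξ.2⟫))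
          → φ ξ = 0) →
        (∫⁻ ξ in {ξ : EuclideanSpace ℝ (Fin d₀) × EuclideanSpace ℝ (Fin dr) |
              0 ≤ ⟪v.1, ξ.1⟫ + ⟪v.2, ξ.2⟫ ∧ ‖ξ.1‖ ≤ lam * (⟪v.1, ξ.1⟫ + ⟪v.2, ξ.2⟫)},
            Wsk s k₀ (⟪v.1, ξ.1⟫ + ⟪v.2, ξ.2⟫) * (‖φ ξ‖₊ : ℝ≥0∞))
          ≤ ENNReal.ofReal C *
            (if r = ⊤ then
              essSup (fun x : EuclideanSpace ℝ (Fin d₀) =>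
                ∫⁻ y : EuclideanSpace ℝ (Fin dr),
                  ((ENNReal.ofReal (⟪v.1, x⟫ + ⟪v.2, y⟫)) ^ (-σ) + 1)
                    * (‖φ (x, y)‖₊ : ℝ≥0∞)) volume
            else
              (∫⁻ x : EuclideanSpace ℝ (Fin d₀),
                (∫⁻ y : EuclideanSpace ℝ (Fin dr),
                  ((ENNReal.ofReal (⟪v.1, x⟫ + ⟪v.2, y⟫)) ^ (-σ) + 1)
                    * (‖φ (x, y)‖₊ : ℝ≥0∞)) ^ r.toReal) ^ (1 / r.toReal)) := by
  have hk0R : (0:ℝ) < (k₀:ℝ) := by positivity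
  have hd₀R : (0:ℝ) < (d₀:ℝ) := by exact_mod_cast hd₀
  have h3s : 3/s < 0 := div_neg_of_pos_of_neg three_pos hs
  by_cases hrt : r = ⊤
  · -- case r = ⊤
    subst hrt
    simp only [ENNReal.inv_top, ENNReal.toReal_zero, sub_zero, mul_one] at hσ
    set β := max ((1:ℝ)/(k₀:ℝ) - σ) 0 with hβdef
    have hβ0 : 0 ≤ β := le_max_right _ _
    have hβσ : 1/(k₀:ℝ) - σ ≤ β := le_max_left _ _
    have hβd : β < (d₀:ℝ) := max_lt (by linarith) hd₀R
    set K := lam ^ β + (3 - 3/s) with hKdef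
    have hK0 : 0 < K := by
      have := Real.rpow_pos_of_pos hlam β; rw [hKdef]; linarith
    set G : EuclideanSpace ℝ (Fin d₀) → ℝ≥0∞ :=
      fun x => ENNReal.ofReal (K * ((‖x‖ ^ (-β) + 1) * Real.exp (s/(2*lam) * ‖x‖))) with hGdef
    have hGmeas : Measurable G := by simp only [hGdef]; fun_prop
    have hGfin : ∫⁻ x, G x < ⊤ := by
      have hc : 0 < -s/(2*lam) := div_pos (by linarith) (by linarith)
      have heq : ∀ x : EuclideanSpace ℝ (Fin d₀), G x = ENNReal.ofReal K *
          ENNReal.ofReal ((‖x‖ ^ (-β) + 1) * Real.exp (-((-s/(2*lam)) * ‖x‖))) := by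
        intro x
        simp only [hGdef]
        rw [show s/(2*lam) * ‖x‖ = -((-s/(2*lam)) * ‖x‖) by ring, ENNReal.ofReal_mul hK0.le]
      calc ∫⁻ x, G x = ∫⁻ x : EuclideanSpace ℝ (Fin d₀), ENNReal.ofReal K *
            ENNReal.ofReal ((‖x‖ ^ (-β) + 1) * Real.exp (-((-s/(2*lam)) * ‖x‖))) :=
          lintegral_congr heq
        _ = ENNReal.ofReal K * ∫⁻ x : EuclideanSpace ℝ (Fin d₀),
            ENNReal.ofReal ((‖x‖ ^ (-β) + 1) * Real.exp (-((-s/(2*lam)) * ‖x‖))) :=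
          lintegral_const_mul' _ _ ENNReal.ofReal_ne_top
        _ < ⊤ := ENNReal.mul_lt_top ENNReal.ofReal_lt_top
            (finite_radial d₀ hd₀ hβ0 hβd hc)
    refine ⟨(∫⁻ x, G x).toReal, ENNReal.toReal_nonneg, ?_⟩
    intro dr v hv φ hφm _
    rw [if_pos rfl]
    have hred := reduction17 d₀ hd₀ lam hlam k₀ hk₀ s hs σ β hβ0 hβσ dr v hv φ hφm
    refine hred.trans ?_
    set F := fun x : EuclideanSpace ℝ (Fin d₀) => ∫⁻ y : EuclideanSpace ℝ (Fin dr),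
      ((ENNReal.ofReal (⟪v.1, x⟫ + ⟪v.2, y⟫)) ^ (-σ) + 1) * (‖φ (x, y)‖₊ : ℝ≥0∞) with hF
    show (∫⁻ x, G x * F x) ≤ ENNReal.ofReal (∫⁻ x, G x).toReal * essSup F volume
    calc ∫⁻ x, G x * F x ≤ ∫⁻ x, G x * essSup F volume :=
          lintegral_mono_ae ((ENNReal.ae_le_essSup F).mono fun x hx => mul_le_mul_right hx _)
      _ = (∫⁻ x, G x) * essSup F volume := lintegral_mul_const _ hGmeas
      _ = ENNReal.ofReal (∫⁻ x, G x).toReal * essSup F volume := by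
          rw [ENNReal.ofReal_toReal hGfin.ne]
  by_cases hr1 : r = 1
  · -- case r = 1
    subst hr1
    have hσ' : 1/(k₀:ℝ) < σ := by simpa using hσ
    have hβσ : 1/(k₀:ℝ) - σ ≤ (0:ℝ) := by linarith
    set K := lam ^ (0:ℝ) + (3 - 3/s) with hKdef
    have hK0 : 0 < K := by
      rw [hKdef, Real.rpow_zero]; linarith
    refine ⟨2*K, le_of_lt (mul_pos two_pos hK0), ?_⟩
    intro dr v hv φ hφm _
    rw [if_neg ENNReal.one_ne_top]
    have hred := reduction17 d₀ hd₀ lam hlam k₀ hk₀ s hs σ 0 le_rfl hβσ dr v hv φ hφm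
    refine hred.trans ?_
    set G : EuclideanSpace ℝ (Fin d₀) → ℝ≥0∞ :=
      fun x => ENNReal.ofReal (K * ((‖x‖ ^ (-(0:ℝ)) + 1) * Real.exp (s/(2*lam) * ‖x‖))) with hGdef
    set F := fun x : EuclideanSpace ℝ (Fin d₀) => ∫⁻ y : EuclideanSpace ℝ (Fin dr),
      ((ENNReal.ofReal (⟪v.1, x⟫ + ⟪v.2, y⟫)) ^ (-σ) + 1) * (‖φ (x, y)‖₊ : ℝ≥0∞) with hF
    have hGle : ∀ x : EuclideanSpace ℝ (Fin d₀), G x ≤ ENNReal.ofReal (2*K) := by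
      intro x
      simp only [hGdef]
      apply ENNReal.ofReal_le_ofReal
      have h1 : ‖x‖ ^ (-(0:ℝ)) = 1 := by rw [neg_zero, Real.rpow_zero]
      have h2 : Real.exp (s/(2*lam) * ‖x‖) ≤ 1 := by
        rw [Real.exp_le_one_iff]
        have : s/(2*lam) ≤ 0 := div_nonpos_of_nonpos_of_nonneg hs.le (by linarith)
        have := norm_nonneg x
        nlinarith
      rw [h1]
      have h4 : K * Real.exp (s/(2*lam) * ‖x‖) ≤ K * 1 :=
        mul_le_mul_of_nonneg_left h2 hK0.le
      nlinarith [h4]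
    have hfin : ∫⁻ x, G x * F x ≤ ENNReal.ofReal (2*K) * ∫⁻ x, F x := by
      calc ∫⁻ x, G x * F x ≤ ∫⁻ x, ENNReal.ofReal (2*K) * F x :=
            lintegral_mono fun x => mul_le_mul_left (hGle x) _
        _ = ENNReal.ofReal (2*K) * ∫⁻ x, F x := lintegral_const_mul' _ _ ENNReal.ofReal_ne_top
    refine hfin.trans (le_of_eq ?_)
    simp only [ENNReal.toReal_one, ENNReal.rpow_one, one_div_one, hF]
  · -- case 1 < r < ⊤
    have hp1 : 1 < r.toReal := by
      rw [← ENNReal.toReal_one]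
      exact ENNReal.toReal_strict_mono hrt (lt_of_le_of_ne hr (Ne.symm hr1))
    set p := r.toReal with hpdef
    have hpq : p.HolderConjugate (p/(p-1)) := Real.HolderConjugate.conjExponent hp1
    set q := p/(p-1) with hqdef
    have hq1 : 1 < q := hpq.symm.lt
    have hq0 : 0 < q := hpq.symm.pos
    rw [ENNReal.toReal_inv] at hσ
    have hσ' : 1/(k₀:ℝ) < (d₀:ℝ) * q⁻¹ + σ := by
      rwa [hpq.one_sub_inv] at hσ
    set β := max ((1:ℝ)/(k₀:ℝ) - σ) 0 with hβdef
    have hβ0 : 0 ≤ β := le_max_right _ _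
    have hβσ : 1/(k₀:ℝ) - σ ≤ β := le_max_left _ _
    have hβq : β * q < (d₀:ℝ) := by
      have hβlt : β < (d₀:ℝ) * q⁻¹ := by
        apply max_lt (by linarith)
        positivity
      have := mul_lt_mul_of_pos_right hβlt hq0
      rwa [mul_assoc, inv_mul_cancel₀ hq0.ne', mul_one] at this
    set K := lam ^ β + (3 - 3/s) with hKdef
    have hK0 : 0 < K := by
      have := Real.rpow_pos_of_pos hlam β; rw [hKdef]; linarith
    set G : EuclideanSpace ℝ (Fin d₀) → ℝ≥0∞ :=
      fun x => ENNReal.ofReal (K * ((‖x‖ ^ (-β) + 1) * Real.exp (s/(2*lam) * ‖x‖))) with hGdef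
    have hGmeas : Measurable G := by simp only [hGdef]; fun_prop
    have hc : 0 < q * (-s/(2*lam)) :=
      mul_pos hq0 (div_pos (by linarith) (by linarith))
    have hGpt : ∀ x : EuclideanSpace ℝ (Fin d₀), (G x) ^ q ≤ ENNReal.ofReal ((2*K)^q) *
        ENNReal.ofReal ((‖x‖ ^ (-(β*q)) + 1) * Real.exp (-((q * (-s/(2*lam))) * ‖x‖))) := by
      intro x
      simp only [hGdef]
      rw [ENNReal.ofReal_rpow_of_nonneg (mul_nonneg hK0.le (by positivity)) hq0.le,
        ← ENNReal.ofReal_mul (by positivity)]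
      apply ENNReal.ofReal_le_ofReal
      have ht0 : (0:ℝ) ≤ ‖x‖ := norm_nonneg _
      have ha : (0:ℝ) ≤ ‖x‖ ^ (-β) := Real.rpow_nonneg ht0 _
      have hE : (0:ℝ) < Real.exp (s/(2*lam) * ‖x‖) := Real.exp_pos _
      have hEq : (Real.exp (s/(2*lam) * ‖x‖)) ^ q
          = Real.exp (-((q * (-s/(2*lam))) * ‖x‖)) := by
        rw [← Real.exp_mul]
        congr 1
        ring
      have haq : (‖x‖ ^ (-β)) ^ q = ‖x‖ ^ (-(β*q)) := by
        rw [← Real.rpow_mul ht0, neg_mul]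
      calc (K * ((‖x‖ ^ (-β) + 1) * Real.exp (s/(2*lam) * ‖x‖))) ^ q
          = K ^ q * ((‖x‖ ^ (-β) + 1) ^ q * (Real.exp (s/(2*lam) * ‖x‖)) ^ q) := by
            rw [Real.mul_rpow hK0.le (by positivity), Real.mul_rpow (by positivity) hE.le]
        _ ≤ K ^ q * ((2 ^ q * ((‖x‖ ^ (-β)) ^ q + 1)) * (Real.exp (s/(2*lam) * ‖x‖)) ^ q) := by
            have hKq : (0:ℝ) ≤ K ^ q := Real.rpow_nonneg hK0.le _
            have hexpq : (0:ℝ) ≤ (Real.exp (s/(2*lam) * ‖x‖)) ^ q :=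
              Real.rpow_nonneg hE.le _
            exact mul_le_mul_of_nonneg_left
              (mul_le_mul_of_nonneg_right (add_one_rpow_le ha hq1.le) hexpq) hKq
        _ = (2*K) ^ q * ((‖x‖ ^ (-(β*q)) + 1) * Real.exp (-((q * (-s/(2*lam))) * ‖x‖))) := by
            rw [Real.mul_rpow (by norm_num) hK0.le, hEq, haq]
            ring
    have hGq : ∫⁻ x, (G x) ^ q < ⊤ := by
      calc ∫⁻ x, (G x) ^ q ≤ ∫⁻ x : EuclideanSpace ℝ (Fin d₀), ENNReal.ofReal ((2*K)^q) *
            ENNReal.ofReal ((‖x‖ ^ (-(β*q)) + 1) * Real.exp (-((q * (-s/(2*lam))) * ‖x‖))) :=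
          lintegral_mono hGpt
        _ = ENNReal.ofReal ((2*K)^q) * ∫⁻ x : EuclideanSpace ℝ (Fin d₀),
            ENNReal.ofReal ((‖x‖ ^ (-(β*q)) + 1) * Real.exp (-((q * (-s/(2*lam))) * ‖x‖))) :=
          lintegral_const_mul' _ _ ENNReal.ofReal_ne_top
        _ < ⊤ := ENNReal.mul_lt_top ENNReal.ofReal_lt_top
            (finite_radial d₀ hd₀ (by positivity) hβq hc)
    have hCne : (∫⁻ x, (G x) ^ q) ^ (1/q) ≠ ⊤ :=
      (ENNReal.rpow_lt_top_of_nonneg (by positivity) hGq.ne).ne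
    refine ⟨((∫⁻ x, (G x) ^ q) ^ (1/q)).toReal, ENNReal.toReal_nonneg, ?_⟩
    intro dr v hv φ hφm _
    rw [if_neg hrt]
    have hred := reduction17 d₀ hd₀ lam hlam k₀ hk₀ s hs σ β hβ0 hβσ dr v hv φ hφm
    refine hred.trans ?_
    set F := fun x : EuclideanSpace ℝ (Fin d₀) => ∫⁻ y : EuclideanSpace ℝ (Fin dr),
      ((ENNReal.ofReal (⟪v.1, x⟫ + ⟪v.2, y⟫)) ^ (-σ) + 1) * (‖φ (x, y)‖₊ : ℝ≥0∞) with hF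
    have hFmeas : Measurable F := by
      apply Measurable.lintegral_prod_right
      have hpc : Continuous (fun ξ : EuclideanSpace ℝ (Fin d₀) × EuclideanSpace ℝ (Fin dr) =>
          ⟪v.1, ξ.1⟫ + ⟪v.2, ξ.2⟫) :=
        (Continuous.inner continuous_const continuous_fst).add
          (Continuous.inner continuous_const continuous_snd)
      exact (((ENNReal.continuous_rpow_const.measurable).comp
        hpc.measurable.ennreal_ofReal).add measurable_const).mul hφm.nnnorm.coe_nnreal_ennreal
    have hHolder := ENNReal.lintegral_mul_le_Lp_mul_Lq volume hpq.symm
      hGmeas.aemeasurable hFmeas.aemeasurable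
    show (∫⁻ x, G x * F x) ≤
      ENNReal.ofReal ((∫⁻ x, (G x) ^ q) ^ (1/q)).toReal * (∫⁻ x, F x ^ p) ^ (1/p)
    calc ∫⁻ x, G x * F x = ∫⁻ x, (G * F) x := by simp only [Pi.mul_apply]
      _ ≤ (∫⁻ x, (G x) ^ q) ^ (1/q) * (∫⁻ x, (F x) ^ p) ^ (1/p) := hHolder
      _ = ENNReal.ofReal ((∫⁻ x, (G x) ^ q) ^ (1/q)).toReal * (∫⁻ x, F x ^ p) ^ (1/p) := by
          rw [ENNReal.ofReal_toReal hCne]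

end
end
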